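/- arXiv:2406.16343 — 8 statements merged into one kernel-verified Lean document; each statement's English description precedes it below -/
import Mathlib

section
/- Let A* be an optimal delegation set, ū = max{b_i : i ∈ A* ∪ {0}}, and Sur = E[v_{g(A*,v)} − (ū − b_{g(A*,v)})]. Then the threshold set A_ū = {i ∈ Ω : b_i ≤ ū} satisfies f(A_ū) ≥ Sur. (This holds for arbitrary, possibly correlated, value distributions and a possibly randomized outside option.) -/
open Finset

/-!
Delegated choice with an outside option.  There are `n` actions `1, …, n`
(the nonzero elements of `Fin (n+1)`) plus the outside option, action `0`.
Action `i` has a known bias `b i`; the value profile `v : Fin (n+1) → ℝ` is drawn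
from a finitely supported distribution with support `S` and probability mass `p`.
-/

/-- Value profiles for `n` actions plus the outside option (index `0`). -/
abbrev Profile (n : ℕ) := Fin (n + 1) → ℝ

/-- `g` is a valid agent choice function for biases `b`: from the menu `A ∪ {0}` it
picks an agent-utility-maximizing action (utility of `i` is `v i + b i`),
breaking ties in favor of larger value. -/
def IsChoice (n : ℕ) (b : Fin (n + 1) → ℝ)
    (g : Finset (Fin (n + 1)) → Profile n → Fin (n + 1)) : Prop :=
  ∀ (A : Finset (Fin (n + 1))) (v : Profile n),
    g A v ∈ insert 0 A ∧
    (∀ j ∈ insert 0 A, v j + b j ≤ v (g A v) + b (g A v)) ∧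
    (∀ j ∈ insert 0 A, v j + b j = v (g A v) + b (g A v) → v j ≤ v (g A v))

/-- The principal's expected utility `f(A)` from menu `A`. -/
def util {n : ℕ} (S : Finset (Profile n)) (p : Profile n → ℝ)
    (g : Finset (Fin (n + 1)) → Profile n → Fin (n + 1))
    (A : Finset (Fin (n + 1))) : ℝ :=
  ∑ v ∈ S, p v * v (g A v)

/-- The threshold menu `A_t = {i ∈ Ω : b i ≤ t}`. -/
noncomputable def thresh (n : ℕ) (b : Fin (n + 1) → ℝ) (t : ℝ) : Finset (Fin (n + 1)) :=
  Finset.univ.filter fun i => i ≠ 0 ∧ b i ≤ t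

/-- `S, p` is a finitely supported probability distribution over nonnegative value
profiles. -/
def ValidDist {n : ℕ} (S : Finset (Profile n)) (p : Profile n → ℝ) : Prop :=
  (∀ v ∈ S, 0 ≤ p v) ∧ (∑ v ∈ S, p v = 1) ∧ ∀ v ∈ S, ∀ i, 0 ≤ v i

/-- The coordinates `v 0, v 1, …, v n` are mutually independent: the joint mass of
every profile is the product of the marginal masses of its coordinates. -/
def IndepValues {n : ℕ} (S : Finset (Profile n)) (p : Profile n → ℝ) : Prop :=
  ∀ w : Profile n,
    (∑ v ∈ S.filter fun v => v = w, p v)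
      = ∏ i : Fin (n + 1), ∑ v ∈ S.filter fun v => v i = w i, p v

/-- `Astar` is an optimal menu: a subset of `Ω` (not containing the outside
option `0`) maximizing the principal's expected utility. -/
def OptimalMenu {n : ℕ} (S : Finset (Profile n)) (p : Profile n → ℝ)
    (g : Finset (Fin (n + 1)) → Profile n → Fin (n + 1))
    (Astar : Finset (Fin (n + 1))) : Prop :=
  (0 : Fin (n + 1)) ∉ Astar ∧
    ∀ A : Finset (Fin (n + 1)), (0 : Fin (n + 1)) ∉ A →
      util S p g A ≤ util S p g Astar

/-!
The bound holds profile by profile. Every action of `A* ∪ {0}` has bias at most `ū`, so it is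
still available in `A_ū ∪ {0}`; hence the agent's choice `j` from `A_ū` gives him at least the
utility of his choice `i` from `A*`, i.e. `v j + b j ≥ v i + b i`. As `b j ≤ ū` too, the
principal gets `v j ≥ v i - (ū - b i)`. Taking expectations gives the claim.
-/

theorem insert_zero_subset_insert_zero_thresh {n : ℕ} {b : Fin (n + 1) → ℝ} {t : ℝ}
    {A : Finset (Fin (n + 1))} (hA : ∀ i ∈ A, b i ≤ t) :
    insert 0 A ⊆ insert 0 (thresh n b t) := by
  intro i hi
  by_cases hi0 : i = 0
  · exact hi0 ▸ mem_insert_self _ _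
  · have hiA : i ∈ A := (mem_insert.mp hi).resolve_left hi0
    exact mem_insert_of_mem (mem_filter.mpr ⟨mem_univ i, hi0, hA i hiA⟩)

theorem bias_le_of_mem_insert_zero_thresh {n : ℕ} {b : Fin (n + 1) → ℝ} {t : ℝ}
    (h0 : b 0 ≤ t) {j : Fin (n + 1)} (hj : j ∈ insert 0 (thresh n b t)) : b j ≤ t := by
  rcases mem_insert.mp hj with rfl | hj
  · exact h0
  · exact (mem_filter.mp hj).2.2

theorem IsChoice.value_sub_bias_gap_le {n : ℕ} {b : Fin (n + 1) → ℝ}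
    {g : Finset (Fin (n + 1)) → Profile n → Fin (n + 1)} (hg : IsChoice n b g)
    {A B : Finset (Fin (n + 1))} (hAB : insert 0 A ⊆ insert 0 B) {t : ℝ}
    (hB : ∀ j ∈ insert 0 B, b j ≤ t) (v : Profile n) :
    v (g A v) - (t - b (g A v)) ≤ v (g B v) := by
  have hutil := (hg B v).2.1 (g A v) (hAB (hg A v).1)
  have hbias := hB (g B v) (hg B v).1
  linarith

theorem threshold_secures_surplus_general {n : ℕ} (b : Fin (n + 1) → ℝ)
    (S : Finset (Profile n)) (p : Profile n → ℝ) (hdist : ValidDist S p)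
    (g : Finset (Fin (n + 1)) → Profile n → Fin (n + 1)) (hg : IsChoice n b g)
    (Astar : Finset (Fin (n + 1)))
    (ubar : ℝ) (hu : ubar = (insert 0 Astar).sup' (Finset.insert_nonempty 0 Astar) b) :
    (∑ v ∈ S, p v * (v (g Astar v) - (ubar - b (g Astar v))))
      ≤ util S p g (thresh n b ubar) := by
  have hbias : ∀ i ∈ insert 0 Astar, b i ≤ ubar := fun i hi => hu ▸ le_sup' b hi
  have hsub : insert 0 Astar ⊆ insert 0 (thresh n b ubar) :=
    insert_zero_subset_insert_zero_thresh fun i hi => hbias i (mem_insert_of_mem hi)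
  have hthresh : ∀ j ∈ insert 0 (thresh n b ubar), b j ≤ ubar :=
    fun _ => bias_le_of_mem_insert_zero_thresh (hbias 0 (mem_insert_self 0 Astar))
  refine sum_le_sum fun v hv => mul_le_mul_of_nonneg_left ?_ (hdist.1 v hv)
  exact hg.value_sub_bias_gap_le hsub hthresh v

/-- With `ū = max{b i : i ∈ A* ∪ {0}}`, the threshold menu `A_ū`
secures the aligned part of the optimal utility: `f(A_ū) ≥ Sur`, where
`Sur = E[v_{g(A*,v)} − (ū − b_{g(A*,v)})]`.  This holds for arbitrary, possibly
correlated value distributions and a possibly randomized outside option. -/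
theorem threshold_secures_surplus {n : ℕ} (b : Fin (n + 1) → ℝ)
    (S : Finset (Profile n)) (p : Profile n → ℝ) (hdist : ValidDist S p)
    (g : Finset (Fin (n + 1)) → Profile n → Fin (n + 1)) (hg : IsChoice n b g)
    (Astar : Finset (Fin (n + 1))) (hopt : OptimalMenu S p g Astar)
    (ubar : ℝ) (hu : ubar = (insert 0 Astar).sup' (Finset.insert_nonempty 0 Astar) b) :
    (∑ v ∈ S, p v * (v (g Astar v) - (ubar - b (g Astar v))))
      ≤ util S p g (thresh n b ubar) :=
  threshold_secures_surplus_general b S p hdist g hg Astar ubar hu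
end

section
/- Assume the values v_0, v_1, …, v_n are mutually independent. Then for any threshold t ∈ ℝ, there exists a single (possibly new) action a(t) with bias b_{a(t)} = t and a deterministic (constant) value v_{a(t)} such that f(A_t) ≥ f((A_t ∩ A*) ∪ {a(t)}), where the right-hand side is the principal's utility when the agent chooses from (A_t ∩ A*) ∪ {a(t)} ∪ {0}. -/
open Finset

/-!
Split `A_t` into `B = A_t ∩ A*` and `C = A_t \ A*`. By independence, resampling the values of
`C` from an independent copy `x` leaves `f(A_t)` unchanged, so some fixed `x` does no better
than average. For that `x`, let the new action have bias `t` and agent utility equal to the best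
agent utility `max_{i ∈ C} (x i + b i)` of `C`. Profile by profile, the agent facing
`B ∪ {a(t)}` then picks an action of the same utility as the agent facing `A_t` (with `C` frozen
at `x`), and the principal gets no more: the new action's value is at most that of the maximizer
in `C` because biases in `C` are at most `t`, and the tie-break toward larger values does the rest.
-/

section Mixing

variable {ι : Type*} [DecidableEq ι] {κ : ι → Type*}

lemma piecewise_piecewise_swap (C : Finset ι) (y x : ∀ i, κ i) :
    C.piecewise (C.piecewise y x) (C.piecewise x y) = y := by
  ext i
  by_cases hi : i ∈ C <;> simp [hi]

variable [Fintype ι]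

lemma sum_piFinset_prod_eq_one {D : ∀ i, Finset (κ i)} {q : ∀ i, κ i → ℝ}
    (hq : ∀ i, ∑ a ∈ D i, q i a = 1) :
    ∑ x ∈ Fintype.piFinset D, ∏ i, q i (x i) = 1 := by
  rw [← prod_univ_sum]
  simp [hq]

lemma prod_mul_prod_piecewise (q : ∀ i, κ i → ℝ) (C : Finset ι) (y x : ∀ i, κ i) :
    (∏ i, q i (C.piecewise y x i)) * ∏ i, q i (C.piecewise x y i)
      = (∏ i, q i (y i)) * ∏ i, q i (x i) := by
  rw [← prod_mul_distrib, ← prod_mul_distrib]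
  refine prod_congr rfl fun i _ => ?_
  by_cases hi : i ∈ C <;> simp [hi, mul_comm]

lemma piecewise_mem_piFinset {D : ∀ i, Finset (κ i)} (C : Finset ι) {y x : ∀ i, κ i}
    (hy : y ∈ Fintype.piFinset D) (hx : x ∈ Fintype.piFinset D) :
    C.piecewise y x ∈ Fintype.piFinset D :=
  Fintype.mem_piFinset.2 fun i =>
    C.piecewise_cases y x (· ∈ D i) (Fintype.mem_piFinset.1 hy i) (Fintype.mem_piFinset.1 hx i)

/-- Under a product distribution, resampling the coordinates in `C` from an independent copy does
not change expectations. -/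
lemma sum_prod_mul_sum_prod_mul_piecewise {D : ∀ i, Finset (κ i)} {q : ∀ i, κ i → ℝ}
    (hq : ∀ i, ∑ a ∈ D i, q i a = 1) (C : Finset ι) (φ : (∀ i, κ i) → ℝ) :
    ∑ y ∈ Fintype.piFinset D, (∏ i, q i (y i)) *
        ∑ x ∈ Fintype.piFinset D, (∏ i, q i (x i)) * φ (C.piecewise y x)
      = ∑ x ∈ Fintype.piFinset D, (∏ i, q i (x i)) * φ x := by
  set X := Fintype.piFinset D
  set w : (∀ i, κ i) → ℝ := fun x => ∏ i, q i (x i)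
  let swap : (∀ i, κ i) × (∀ i, κ i) → (∀ i, κ i) × (∀ i, κ i) :=
    fun yx => (C.piecewise yx.1 yx.2, C.piecewise yx.2 yx.1)
  have hswap : ∀ yx ∈ X ×ˢ X, swap yx ∈ X ×ˢ X := fun yx h =>
    mem_product.2 ⟨piecewise_mem_piFinset C (mem_product.1 h).1 (mem_product.1 h).2,
      piecewise_mem_piFinset C (mem_product.1 h).2 (mem_product.1 h).1⟩
  have hinvol : ∀ yx ∈ X ×ˢ X, swap (swap yx) = yx := fun yx _ =>
    Prod.ext (piecewise_piecewise_swap C yx.1 yx.2) (piecewise_piecewise_swap C yx.2 yx.1)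
  calc ∑ y ∈ X, w y * ∑ x ∈ X, w x * φ (C.piecewise y x)
      = ∑ yx ∈ X ×ˢ X, w yx.1 * w yx.2 * φ (C.piecewise yx.1 yx.2) := by
        rw [sum_product]
        simp_rw [mul_sum, mul_assoc]
    _ = ∑ yx ∈ X ×ˢ X, w yx.1 * w yx.2 * φ yx.1 :=
        sum_nbij' swap swap hswap hswap hinvol hinvol fun yx _ => by
          simp only [swap, w, prod_mul_prod_piecewise]
    _ = (∑ y ∈ X, w y * φ y) * ∑ x ∈ X, w x := by
        rw [sum_mul_sum, sum_product]
        simp_rw [mul_right_comm]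
    _ = ∑ x ∈ X, w x * φ x := by
        rw [sum_piFinset_prod_eq_one hq, mul_one]

end Mixing

lemma exists_le_sum_mul_of_sum_eq_one {ι : Type*} {s : Finset ι} {w f : ι → ℝ}
    (hw0 : ∀ i ∈ s, 0 ≤ w i) (hw1 : ∑ i ∈ s, w i = 1) :
    ∃ i ∈ s, f i ≤ ∑ j ∈ s, w j * f j := by
  have hs : s.Nonempty := nonempty_of_sum_ne_zero (hw1 ▸ one_ne_zero)
  obtain ⟨i, hi, hmin⟩ := s.exists_min_image f hs
  refine ⟨i, hi, ?_⟩
  calc f i = ∑ j ∈ s, w j * f i := by rw [← sum_mul, hw1, one_mul]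
    _ ≤ ∑ j ∈ s, w j * f j :=
        sum_le_sum fun j hj => mul_le_mul_of_nonneg_left (hmin j hj) (hw0 j hj)

section Profiles

variable {n : ℕ} {S : Finset (Profile n)} {p : Profile n → ℝ}

noncomputable def marginal (S : Finset (Profile n)) (p : Profile n → ℝ) (i : Fin (n + 1))
    (s : ℝ) : ℝ :=
  ∑ v ∈ S with v i = s, p v

lemma sum_marginal (S : Finset (Profile n)) (p : Profile n → ℝ) (i : Fin (n + 1)) :
    ∑ s ∈ S.image (· i), marginal S p i s = ∑ v ∈ S, p v :=
  sum_fiberwise_of_maps_to (fun _ hv => mem_image_of_mem _ hv) p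

lemma marginal_nonneg (hp0 : ∀ v ∈ S, 0 ≤ p v) (i : Fin (n + 1)) (s : ℝ) :
    0 ≤ marginal S p i s :=
  sum_nonneg fun v hv => hp0 v (mem_filter.1 hv).1

lemma IndepValues.sum_mul_eq_sum_piFinset (hindep : IndepValues S p) (φ : Profile n → ℝ) :
    ∑ v ∈ S, p v * φ v
      = ∑ x ∈ Fintype.piFinset (fun i => S.image (· i)),
          (∏ i, marginal S p i (x i)) * φ x := by
  rw [← sum_fiberwise_of_maps_to (g := id)
    (fun v hv => Fintype.mem_piFinset.2 fun i => mem_image_of_mem (· i) hv)]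
  refine sum_congr rfl fun x _ => ?_
  simp only [marginal, id, ← hindep x, sum_mul]
  exact sum_congr rfl fun v hv => by rw [(mem_filter.1 hv).2]

lemma exists_sum_mul_piecewise_le (hp0 : ∀ v ∈ S, 0 ≤ p v) (hp1 : ∑ v ∈ S, p v = 1)
    (hindep : IndepValues S p) (C : Finset (Fin (n + 1))) (φ : Profile n → ℝ) :
    ∃ x : Profile n, ∑ v ∈ S, p v * φ (C.piecewise x v) ≤ ∑ v ∈ S, p v * φ v := by
  have hq : ∀ i, ∑ s ∈ S.image (· i), marginal S p i s = 1 := fun i =>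
    (sum_marginal S p i).trans hp1
  obtain ⟨x, -, hx⟩ := exists_le_sum_mul_of_sum_eq_one
    (f := fun x => ∑ v ∈ S, p v * φ (C.piecewise x v))
    (fun x _ => prod_nonneg fun i _ => marginal_nonneg hp0 i (x i))
    (sum_piFinset_prod_eq_one hq)
  refine ⟨x, hx.trans_eq ?_⟩
  simp_rw [hindep.sum_mul_eq_sum_piFinset]
  exact sum_prod_mul_sum_prod_mul_piecewise hq C φ

end Profiles

lemma value_le_of_max_of_matched {ι ι' : Type*} {U V : ι → ℝ} {U' V' : ι' → ℝ}
    {M : Finset ι} {M' : Finset ι'} {k : ι} {k' : ι'}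
    (hk : k ∈ M) (hkmax : ∀ i ∈ M, U i ≤ U k) (hktie : ∀ i ∈ M, U i = U k → V i ≤ V k)
    (hk' : k' ∈ M') (hk'max : ∀ j ∈ M', U' j ≤ U' k')
    (hdom : ∀ i ∈ M, ∃ j ∈ M', U i ≤ U' j)
    (hmatch : ∀ j ∈ M', (∀ i ∈ M, U i ≤ U' j) → ∃ i ∈ M, U i = U' j ∧ V' j ≤ V i) :
    V' k' ≤ V k := by
  have hbeat : ∀ i ∈ M, U i ≤ U' k' := fun i hi => by
    obtain ⟨j, hj, hij⟩ := hdom i hi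
    exact hij.trans (hk'max j hj)
  obtain ⟨i, hi, hUi, hVi⟩ := hmatch k' hk' hbeat
  exact hVi.trans (hktie i hi (le_antisymm (hkmax i hi) ((hbeat k hk).trans_eq hUi.symm)))

/-- When `C = ∅` this is a sentinel below the outside option's utility at any nonnegative value,
so that an action with this utility is never chosen. -/
noncomputable def bestUtility {n : ℕ} (b : Fin (n + 1) → ℝ) (C : Finset (Fin (n + 1)))
    (x : Profile n) : ℝ :=
  if h : C.Nonempty then C.sup' h (fun i => x i + b i) else b 0 - 1

lemma le_bestUtility {n : ℕ} {b : Fin (n + 1) → ℝ} {C : Finset (Fin (n + 1))} {x : Profile n}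
    {i : Fin (n + 1)} (hi : i ∈ C) : x i + b i ≤ bestUtility b C x := by
  rw [bestUtility, dif_pos ⟨i, hi⟩]
  exact le_sup' (fun i => x i + b i) hi

lemma exists_eq_bestUtility {n : ℕ} (b : Fin (n + 1) → ℝ) {C : Finset (Fin (n + 1))}
    (x : Profile n) (hC : C.Nonempty) : ∃ i ∈ C, bestUtility b C x = x i + b i := by
  rw [bestUtility, dif_pos hC]
  exact exists_mem_eq_sup' hC _

lemma bestUtility_empty {n : ℕ} (b : Fin (n + 1) → ℝ) (x : Profile n) :
    bestUtility b ∅ x = b 0 - 1 := by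
  simp [bestUtility]

/-- The menu `B ∪ {a(t)}` of the instance augmented by the action `a(t) = Fin.last (n + 1)`. -/
def snocMenu {n : ℕ} (B : Finset (Fin (n + 1))) : Finset (Fin (n + 2)) :=
  insert (Fin.last (n + 1)) (B.image Fin.castSucc)

lemma mem_insert_zero_snocMenu {n : ℕ} {B : Finset (Fin (n + 1))} {j : Fin (n + 2)} :
    j ∈ insert 0 (snocMenu B) ↔ j = Fin.last (n + 1) ∨ ∃ i ∈ insert 0 B, j = i.castSucc := by
  simp only [snocMenu, mem_insert, mem_image, exists_eq_or_imp, Fin.castSucc_zero]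
  tauto

section Augmented

variable {n : ℕ} {b : Fin (n + 1) → ℝ} {t : ℝ} {B C : Finset (Fin (n + 1))} {x v : Profile n}
  {w : ℝ}

lemma exists_snocMenu_utility_ge (hw : w + t = bestUtility b C x) :
    ∀ i ∈ insert 0 (B ∪ C), ∃ j ∈ insert 0 (snocMenu B),
      C.piecewise x v i + b i
        ≤ (Fin.snoc v w : Profile (n + 1)) j + (Fin.snoc b t : Fin (n + 2) → ℝ) j := by
  intro i hi
  by_cases hiC : i ∈ C
  · refine ⟨Fin.last (n + 1), mem_insert_zero_snocMenu.2 (Or.inl rfl), ?_⟩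
    simpa [piecewise_eq_of_mem _ _ _ hiC, hw] using le_bestUtility hiC
  · refine ⟨i.castSucc, mem_insert_zero_snocMenu.2 (Or.inr ⟨i, ?_, rfl⟩), ?_⟩
    · simpa [hiC] using hi
    · simp [piecewise_eq_of_notMem _ _ _ hiC]

lemma exists_utility_eq_of_snocMenu_max (hBC : Disjoint B C) (h0C : 0 ∉ C)
    (hCt : ∀ i ∈ C, b i ≤ t) (hv0 : 0 ≤ v 0) (hw : w + t = bestUtility b C x) :
    ∀ j ∈ insert 0 (snocMenu B),
      (∀ i ∈ insert 0 (B ∪ C), C.piecewise x v i + b i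
        ≤ (Fin.snoc v w : Profile (n + 1)) j + (Fin.snoc b t : Fin (n + 2) → ℝ) j) →
      ∃ i ∈ insert 0 (B ∪ C), C.piecewise x v i + b i
          = (Fin.snoc v w : Profile (n + 1)) j + (Fin.snoc b t : Fin (n + 2) → ℝ) j
        ∧ (Fin.snoc v w : Profile (n + 1)) j ≤ C.piecewise x v i := by
  intro j hj hbeat
  rcases mem_insert_zero_snocMenu.1 hj with rfl | ⟨i, hi, rfl⟩
  · obtain rfl | hC := C.eq_empty_or_nonempty
    · have h0 := hbeat 0 (mem_insert_self _ _)
      simp only [piecewise_empty, Fin.snoc_last] at h0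
      linarith [bestUtility_empty b x]
    obtain ⟨i, hiC, hi⟩ := exists_eq_bestUtility b x hC
    refine ⟨i, mem_insert_of_mem (mem_union_right _ hiC), ?_, ?_⟩ <;>
      simp only [piecewise_eq_of_mem _ _ _ hiC, Fin.snoc_last]
    · linarith
    · linarith [hCt i hiC]
  · have hiC : i ∉ C := by
      rcases mem_insert.1 hi with rfl | hiB
      · exact h0C
      · exact disjoint_left.1 hBC hiB
    refine ⟨i, ?_, ?_, ?_⟩
    · rcases mem_insert.1 hi with rfl | hiB
      · exact mem_insert_self _ _
      · exact mem_insert_of_mem (mem_union_left _ hiB)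
    all_goals simp [piecewise_eq_of_notMem _ _ _ hiC]

end Augmented

lemma snoc_choice_value_le {n : ℕ} {b : Fin (n + 1) → ℝ} {t : ℝ}
    {g : Finset (Fin (n + 1)) → Profile n → Fin (n + 1)} (hg : IsChoice n b g)
    {g' : Finset (Fin (n + 2)) → Profile (n + 1) → Fin (n + 2)}
    (hg' : IsChoice (n + 1) (Fin.snoc b t) g') {B C : Finset (Fin (n + 1))}
    (hBC : Disjoint B C) (h0C : 0 ∉ C) (hCt : ∀ i ∈ C, b i ≤ t) {x v : Profile n}
    (hv0 : 0 ≤ v 0) {w : ℝ} (hw : w + t = bestUtility b C x) :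
    (Fin.snoc v w : Profile (n + 1)) (g' (snocMenu B) (Fin.snoc v w))
      ≤ C.piecewise x v (g (B ∪ C) (C.piecewise x v)) := by
  obtain ⟨hk, hkmax, hktie⟩ := hg (B ∪ C) (C.piecewise x v)
  obtain ⟨hk', hk'max, -⟩ := hg' (snocMenu B) (Fin.snoc v w)
  exact value_le_of_max_of_matched hk hkmax hktie hk' hk'max (exists_snocMenu_utility_ge hw)
    (exists_utility_eq_of_snocMenu_max hBC h0C hCt hv0 hw)

lemma mem_thresh {n : ℕ} {b : Fin (n + 1) → ℝ} {t : ℝ} {i : Fin (n + 1)} :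
    i ∈ thresh n b t ↔ i ≠ 0 ∧ b i ≤ t := by
  simp [thresh]

lemma util_image_snoc {n : ℕ} (S : Finset (Profile n)) (p : Profile n → ℝ) (w : ℝ)
    (g' : Finset (Fin (n + 2)) → Profile (n + 1) → Fin (n + 2)) (A' : Finset (Fin (n + 2))) :
    util (S.image fun v => Fin.snoc v w) (fun v' => p fun i => v' i.castSucc) g' A'
      = ∑ v ∈ S, p v * (Fin.snoc v w : Profile (n + 1)) (g' A' (Fin.snoc v w)) := by
  rw [util, sum_image fun x _ y _ h => (Fin.snoc_injective2 h).1]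
  simp [Fin.snoc_castSucc]

theorem partial_derandomization_general {n : ℕ} (b : Fin (n + 1) → ℝ)
    (S : Finset (Profile n)) (p : Profile n → ℝ)
    (hdist : ValidDist S p) (hindep : IndepValues S p)
    (g : Finset (Fin (n + 1)) → Profile n → Fin (n + 1)) (hg : IsChoice n b g)
    (Astar : Finset (Fin (n + 1)))
    (t : ℝ) :
    ∃ w : ℝ, ∀ g' : Finset (Fin (n + 2)) → Profile (n + 1) → Fin (n + 2),
      IsChoice (n + 1) (Fin.snoc b t) g' →
        util (S.image fun v => Fin.snoc v w) (fun v' => p fun i => v' i.castSucc) g'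
            (insert (Fin.last (n + 1)) ((thresh n b t ∩ Astar).image Fin.castSucc))
          ≤ util S p g (thresh n b t) := by
  obtain ⟨hp0, hp1, hnonneg⟩ := hdist
  set A := thresh n b t
  set C := A \ Astar
  obtain ⟨x, hx⟩ := exists_sum_mul_piecewise_le hp0 hp1 hindep C fun v => v (g A v)
  refine ⟨bestUtility b C x - t, fun g' hg' => ?_⟩
  rw [util_image_snoc]
  refine (sum_le_sum fun v hv => mul_le_mul_of_nonneg_left ?_ (hp0 v hv)).trans hx
  have hA : A ∩ Astar ∪ C = A := (union_comm _ _).trans (sdiff_union_inter A Astar)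
  have h0C : (0 : Fin (n + 1)) ∉ C := fun h => (mem_thresh.1 (mem_sdiff.1 h).1).1 rfl
  have hCt : ∀ i ∈ C, b i ≤ t := fun i hi => (mem_thresh.1 (mem_sdiff.1 hi).1).2
  conv_rhs => rw [← hA]
  exact snoc_choice_value_le hg hg' (disjoint_sdiff_inter A Astar).symm h0C hCt
    (hnonneg v hv 0) (sub_add_cancel _ t)

/-- **partial derandomization.** Under mutually independent values,
for any threshold `t` there is a single new action `a(t)` with bias `t` and a
deterministic value `w` such that `f(A_t) ≥ f((A_t ∩ A*) ∪ {a(t)})`.  The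
augmented instance lives on `Fin (n+2)`: the original actions are embedded via
`Fin.castSucc` (so the outside option `0` stays at `0`), the new action is
`Fin.last (n+1)` with bias `t` (via `Fin.snoc b t`) and constant value `w`. -/
theorem partial_derandomization {n : ℕ} (b : Fin (n + 1) → ℝ)
    (S : Finset (Profile n)) (p : Profile n → ℝ)
    (hdist : ValidDist S p) (hindep : IndepValues S p)
    (g : Finset (Fin (n + 1)) → Profile n → Fin (n + 1)) (hg : IsChoice n b g)
    (Astar : Finset (Fin (n + 1))) (hopt : OptimalMenu S p g Astar)
    (t : ℝ) :
    ∃ w : ℝ, ∀ g' : Finset (Fin (n + 2)) → Profile (n + 1) → Fin (n + 2),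
      IsChoice (n + 1) (Fin.snoc b t) g' →
        util (S.image fun v => Fin.snoc v w) (fun v' => p fun i => v' i.castSucc) g'
            (insert (Fin.last (n + 1)) ((thresh n b t ∩ Astar).image Fin.castSucc))
          ≤ util S p g (thresh n b t) :=
  partial_derandomization_general b S p hdist hindep g hg Astar t
end

section
/- The constant 3 in the threshold approximation guarantee is tight: for every c < 3 there exists a delegation instance with mutually independent, finitely supported values and no outside option in which f(A*) > c · f(A_t) for every threshold t ∈ ℝ. -/
open Finset

/-!
Delegated choice with **no outside option**.  There are `n` actions, indexed by
`Fin n`.  Action `i` has a known bias `b i`; the value profile `v : Fin n → ℝ`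
is drawn from a finitely supported distribution with support `S` and probability
mass `p`.  From a nonempty menu `A` the agent picks an action maximizing
`v i + b i`, breaking ties in favor of larger value `v i`.
-/

/-- `g` is a valid agent choice function for biases `b` (no outside option):
from every nonempty menu `A` it picks an agent-utility-maximizing action,
breaking ties in favor of larger value. -/
def IsChoiceN (n : ℕ) (b : Fin n → ℝ)
    (g : Finset (Fin n) → (Fin n → ℝ) → Fin n) : Prop :=
  ∀ (A : Finset (Fin n)) (v : Fin n → ℝ), A.Nonempty →
    g A v ∈ A ∧
    (∀ j ∈ A, v j + b j ≤ v (g A v) + b (g A v)) ∧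
    (∀ j ∈ A, v j + b j = v (g A v) + b (g A v) → v j ≤ v (g A v))

/-- The principal's expected utility `f(A)` from menu `A`. -/
def utilN {n : ℕ} (S : Finset (Fin n → ℝ)) (p : (Fin n → ℝ) → ℝ)
    (g : Finset (Fin n) → (Fin n → ℝ) → Fin n) (A : Finset (Fin n)) : ℝ :=
  ∑ v ∈ S, p v * v (g A v)

/-- The threshold menu `A_t = {i : b i ≤ t}`. -/
noncomputable def threshN (n : ℕ) (b : Fin n → ℝ) (t : ℝ) : Finset (Fin n) :=
  Finset.univ.filter fun i => b i ≤ t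

/-- `S, p` is a finitely supported probability distribution over nonnegative value
profiles. -/
def ValidDistN {n : ℕ} (S : Finset (Fin n → ℝ)) (p : (Fin n → ℝ) → ℝ) : Prop :=
  (∀ v ∈ S, 0 ≤ p v) ∧ (∑ v ∈ S, p v = 1) ∧ ∀ v ∈ S, ∀ i, 0 ≤ v i

/-- The coordinates `v 1, …, v n` are mutually independent: the joint mass of
every profile is the product of the marginal masses of its coordinates. -/
def IndepValuesN {n : ℕ} (S : Finset (Fin n → ℝ)) (p : (Fin n → ℝ) → ℝ) : Prop :=
  ∀ w : Fin n → ℝ,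
    (∑ v ∈ S.filter fun v => v = w, p v)
      = ∏ i : Fin n, ∑ v ∈ S.filter fun v => v i = w i, p v

/-!
Two "lottery" actions `0` and `4` are worth `ε⁻¹` with probability `ε` and `0` otherwise; the
deterministic actions `1`, `2`, `3` are worth about `1`, `1` and `0`, and their biases are of order
`ε⁻¹`, tuned at order `ε²`. From the menu `{0, 2, 4}` the agent always takes the principal's
favourite action, which is worth about `3` in expectation. A threshold menu, however, contains
action `1` or `3` as soon as it contains anything beyond `0`, and the agent then prefers `1` or `3`
to `0` and `2`: so `A_t` yields action `0` (worth `1`), action `1` (worth `1 + ε²`), action `3`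
(worth `5ε²`), or, for the full menu, action `3` or `4` (worth at most `1 + 5ε²` together).
Hence `f(A_t) ≤ 1 + 5ε²` while `f(A*) ≥ 3 - 4ε`.
-/

open Fintype (piFinset mem_piFinset)

section Choice

variable {n : ℕ} {b : Fin n → ℝ} {g : Finset (Fin n) → (Fin n → ℝ) → Fin n}
  {A J : Finset (Fin n)} {v : Fin n → ℝ} {j : Fin n}

lemma IsChoiceN.apply_mem_of_forall_lt (hg : IsChoiceN n b g) (hj : j ∈ A)
    (hdom : ∀ k ∈ A, k ∉ J → v k + b k < v j + b j) : g A v ∈ J := by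
  obtain ⟨hmem, hmax, -⟩ := hg A v ⟨j, hj⟩
  by_contra hJ
  exact (hmax j hj).not_gt (hdom _ hmem hJ)

lemma IsChoiceN.apply_eq_of_forall_lt (hg : IsChoiceN n b g) (hj : j ∈ A)
    (hdom : ∀ k ∈ A, k ≠ j → v k + b k < v j + b j) : g A v = j :=
  mem_singleton.mp <| hg.apply_mem_of_forall_lt hj fun k hk hkj => hdom k hk (by simpa using hkj)

end Choice

section Utility

variable {n : ℕ} {S : Finset (Fin n → ℝ)} {p : (Fin n → ℝ) → ℝ}
  {g : Finset (Fin n) → (Fin n → ℝ) → Fin n}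

@[simp]
lemma mem_threshN {b : Fin n → ℝ} {t : ℝ} {i : Fin n} : i ∈ threshN n b t ↔ b i ≤ t := by
  simp [threshN]

lemma utilN_nonneg (hp : ValidDistN S p) (A : Finset (Fin n)) : 0 ≤ utilN S p g A :=
  sum_nonneg fun v hv => mul_nonneg (hp.1 v hv) (hp.2.2 v hv _)

lemma exists_forall_utilN_le [NeZero n] (S : Finset (Fin n → ℝ)) (p : (Fin n → ℝ) → ℝ)
    (g : Finset (Fin n) → (Fin n → ℝ) → Fin n) :
    ∃ A : Finset (Fin n), A.Nonempty ∧
      ∀ B : Finset (Fin n), B.Nonempty → utilN S p g B ≤ utilN S p g A := by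
  obtain ⟨A, hA, hmax⟩ := exists_max_image (univ.filter fun A : Finset (Fin n) => A.Nonempty)
    (utilN S p g) ⟨univ, by simp⟩
  exact ⟨A, (mem_filter.mp hA).2, fun B hB => hmax B (by simpa using hB)⟩

lemma utilN_le_sum_of_forall_lt {b : Fin n → ℝ} (hp : ValidDistN S p) (hg : IsChoiceN n b g)
    {A J : Finset (Fin n)} {j : Fin n} (hj : j ∈ A)
    (hdom : ∀ v ∈ S, ∀ k ∈ A, k ∉ J → v k + b k < v j + b j) :
    utilN S p g A ≤ ∑ i ∈ J, ∑ v ∈ S, p v * v i := by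
  rw [utilN, sum_comm]
  refine sum_le_sum fun v hv => ?_
  rw [← mul_sum]
  exact mul_le_mul_of_nonneg_left
    (single_le_sum (fun i _ => hp.2.2 v hv i) (hg.apply_mem_of_forall_lt hj (hdom v hv)))
    (hp.1 v hv)

end Utility

section Product

variable {n : ℕ} {T : Fin n → Finset ℝ} {q : Fin n → ℝ → ℝ}

lemma sum_filter_piFinset_apply_eq (hq : ∀ i, ∑ x ∈ T i, q i x = 1) (i : Fin n) (a : ℝ) :
    ∑ v ∈ (piFinset T).filter (fun v => v i = a), ∏ j, q j (v j)
      = if a ∈ T i then q i a else 0 := by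
  split_ifs with ha
  · rw [← Fintype.piFinset_update_singleton_eq_filter_piFinset_eq T i ha, ← prod_univ_sum,
      Fintype.prod_eq_single i fun j hj => by simp [Function.update_of_ne hj, hq]]
    simp
  · rw [Fintype.filter_piFinset_of_notMem T i a ha, sum_empty]

theorem validDistN_piFinset (hq₀ : ∀ i, ∀ x ∈ T i, 0 ≤ q i x)
    (hq : ∀ i, ∑ x ∈ T i, q i x = 1) (hT : ∀ i, ∀ x ∈ T i, 0 ≤ x) :
    ValidDistN (piFinset T) fun v => ∏ i, q i (v i) := by
  refine ⟨fun v hv => prod_nonneg fun i _ => hq₀ i _ (mem_piFinset.mp hv i), ?_,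
    fun v hv i => hT i _ (mem_piFinset.mp hv i)⟩
  rw [← prod_univ_sum]
  simp [hq]

theorem indepValuesN_piFinset (hq : ∀ i, ∑ x ∈ T i, q i x = 1) :
    IndepValuesN (piFinset T) fun v => ∏ i, q i (v i) := by
  intro w
  simp_rw [sum_filter_piFinset_apply_eq hq]
  rw [Fintype.prod_ite_zero, sum_filter, Finset.sum_ite_eq']
  congr 1
  exact propext mem_piFinset

end Product

namespace ThreeApproxTight

section Instance

variable (ε : ℝ)

noncomputable def lottery (s : Bool) : ℝ := if s then ε⁻¹ else 0

noncomputable def lotteryProb (s : Bool) : ℝ := if s then ε else 1 - ε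

noncomputable def bias : Fin 5 → ℝ :=
  ![0, ε⁻¹ - 1, ε⁻¹ - 1 + ε ^ 2, ε⁻¹ - 3 * ε ^ 2, ε⁻¹ - 5 * ε ^ 2 / 2]

noncomputable def support : Fin 5 → Finset ℝ :=
  ![{ε⁻¹, 0}, {1 + ε ^ 2}, {1 - 3 * ε ^ 2}, {5 * ε ^ 2}, {ε⁻¹, 0}]

noncomputable def marginal : Fin 5 → ℝ → ℝ :=
  let lotteryMass x := if x = ε⁻¹ then ε else 1 - ε
  ![lotteryMass, 1, 1, 1, lotteryMass]

noncomputable def mass (v : Fin 5 → ℝ) : ℝ := ∏ i, marginal ε i (v i)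

noncomputable def profile (s t : Bool) : Fin 5 → ℝ :=
  ![lottery ε s, 1 + ε ^ 2, 1 - 3 * ε ^ 2, 5 * ε ^ 2, lottery ε t]

noncomputable def mean : Fin 5 → ℝ := ![1, 1 + ε ^ 2, 1 - 3 * ε ^ 2, 5 * ε ^ 2, 1]

end Instance

variable {ε : ℝ} {g : Finset (Fin 5) → (Fin 5 → ℝ) → Fin 5}

lemma sum_marginal (hε : ε ≠ 0) (i : Fin 5) : ∑ x ∈ support ε i, marginal ε i x = 1 := by
  fin_cases i <;> simp [support, marginal, sum_pair (inv_ne_zero hε), hε.symm]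

lemma validDistN_mass (hε₀ : 0 < ε) (hε₁ : ε ≤ 1 / 10) :
    ValidDistN (piFinset (support ε)) (mass ε) := by
  refine validDistN_piFinset (fun i x hx => ?_) (sum_marginal hε₀.ne') (fun i x hx => ?_)
  · fin_cases i <;> simp [marginal] <;> split_ifs <;> linarith
  · fin_cases i <;> simp [support] at hx <;> rcases hx with rfl | rfl <;>
      first | positivity | nlinarith

lemma indepValuesN_mass (hε : ε ≠ 0) : IndepValuesN (piFinset (support ε)) (mass ε) :=
  indepValuesN_piFinset (sum_marginal hε)

lemma lottery_injective (hε : ε ≠ 0) : Function.Injective (lottery ε) := by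
  intro s t h
  cases s <;> cases t <;> simp_all [lottery]

lemma profile_injective (hε : ε ≠ 0) :
    Function.Injective fun st : Bool × Bool => profile ε st.1 st.2 := by
  rintro ⟨s, t⟩ ⟨s', t'⟩ h
  have h₀ := congrFun h 0
  have h₄ := congrFun h 4
  simp only [profile] at h₀ h₄
  simp [lottery_injective hε h₀, lottery_injective hε (by simpa using h₄)]

lemma piFinset_support :
    piFinset (support ε) = univ.image fun st : Bool × Bool => profile ε st.1 st.2 := by
  ext v
  simp [mem_piFinset, Fin.forall_fin_succ, support, funext_iff, profile, lottery]
  grind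

lemma sum_piFinset_support (hε : ε ≠ 0) (F : (Fin 5 → ℝ) → ℝ) :
    ∑ v ∈ piFinset (support ε), F v = ∑ s, ∑ t, F (profile ε s t) := by
  rw [piFinset_support, sum_image fun _ _ _ _ h => profile_injective hε h, Fintype.sum_prod_type]

lemma mass_profile (hε : ε ≠ 0) (s t : Bool) :
    mass ε (profile ε s t) = lotteryProb ε s * lotteryProb ε t := by
  cases s <;> cases t <;>
    simp [mass, Fin.prod_univ_five, profile, marginal, lottery, lotteryProb, hε.symm]

lemma utilN_eq (hε : ε ≠ 0) (A : Finset (Fin 5)) :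
    utilN (piFinset (support ε)) (mass ε) g A
      = ∑ s, ∑ t, lotteryProb ε s * lotteryProb ε t * profile ε s t (g A (profile ε s t)) := by
  simp only [utilN, sum_piFinset_support hε, mass_profile hε]

lemma sum_mass_mul_apply (hε : ε ≠ 0) (i : Fin 5) :
    ∑ v ∈ piFinset (support ε), mass ε v * v i = mean ε i := by
  simp only [sum_piFinset_support hε, mass_profile hε]
  fin_cases i <;> simp [lotteryProb, profile, lottery, mean] <;> field_simp <;> ring

lemma choice_zero_two_four (hε₀ : 0 < ε) (hε₁ : ε ≤ 1 / 10) (hg : IsChoiceN 5 (bias ε) g)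
    (s t : Bool) : g {0, 2, 4} (profile ε s t) = if t then 4 else if s then 0 else 2 := by
  have hinv : 10 ≤ ε⁻¹ := by rw [le_inv_comm₀ (by norm_num) hε₀]; linarith
  cases s <;> cases t <;> refine hg.apply_eq_of_forall_lt (by simp) fun k hk hkj => ?_ <;>
    fin_cases hk <;> simp_all [profile, bias, lottery] <;> nlinarith

lemma le_utilN_zero_two_four (hε₀ : 0 < ε) (hε₁ : ε ≤ 1 / 10) (hg : IsChoiceN 5 (bias ε) g) :
    3 - 4 * ε ≤ utilN (piFinset (support ε)) (mass ε) g {0, 2, 4} := by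
  simp only [utilN_eq hε₀.ne', choice_zero_two_four hε₀ hε₁ hg]
  simp [lotteryProb, profile, lottery]
  field_simp
  nlinarith [mul_pos hε₀ hε₀, pow_pos hε₀ 3, mul_le_mul_of_nonneg_left hε₁ (pow_pos hε₀ 3).le]

lemma utilN_le_sum_mean_of_forall_lt (hε₀ : 0 < ε) (hε₁ : ε ≤ 1 / 10)
    (hg : IsChoiceN 5 (bias ε) g) {A J : Finset (Fin 5)} {j : Fin 5} (hj : j ∈ A)
    (hdom : ∀ k ∈ A, k ∉ J → ∀ s t,
      profile ε s t k + bias ε k < profile ε s t j + bias ε j) :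
    utilN (piFinset (support ε)) (mass ε) g A ≤ ∑ i ∈ J, mean ε i := by
  simp_rw [← sum_mass_mul_apply hε₀.ne']
  refine utilN_le_sum_of_forall_lt (validDistN_mass hε₀ hε₁) hg hj fun v hv k hk hkJ => ?_
  rw [piFinset_support] at hv
  obtain ⟨⟨s, t⟩, -, rfl⟩ := mem_image.mp hv
  exact hdom k hk hkJ s t

lemma utilN_threshN_le (hε₀ : 0 < ε) (hε₁ : ε ≤ 1 / 10) (hg : IsChoiceN 5 (bias ε) g) {t : ℝ}
    (ht : (threshN 5 (bias ε) t).Nonempty) :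
    utilN (piFinset (support ε)) (mass ε) g (threshN 5 (bias ε) t) ≤ 1 + 5 * ε ^ 2 := by
  suffices ∃ j ∈ threshN 5 (bias ε) t, ∃ J : Finset (Fin 5), ∑ i ∈ J, mean ε i ≤ 1 + 5 * ε ^ 2 ∧
      ∀ k ∈ threshN 5 (bias ε) t, k ∉ J → ∀ s u,
        profile ε s u k + bias ε k < profile ε s u j + bias ε j by
    obtain ⟨j, hj, J, hJ, hdom⟩ := this
    exact (utilN_le_sum_mean_of_forall_lt hε₀ hε₁ hg hj hdom).trans hJ
  have hinv : 10 ≤ ε⁻¹ := by rw [le_inv_comm₀ (by norm_num) hε₀]; linarith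
  have hsq : 0 < ε ^ 2 := by positivity
  have hsq' : ε ^ 2 ≤ ε / 10 := by nlinarith
  have ht₀ : 0 ≤ t := by
    obtain ⟨i, hi⟩ := ht
    fin_cases i <;> simp [bias] at hi <;> linarith
  rcases lt_or_ge t (ε⁻¹ - 1) with h₁ | h₁
  · refine ⟨0, by simpa [bias], {0}, by simp [mean]; positivity, fun k hk hkJ s u => ?_⟩
    fin_cases k <;> simp [bias] at hk hkJ <;> linarith
  rcases lt_or_ge t (ε⁻¹ - 3 * ε ^ 2) with h₃ | h₃
  · refine ⟨1, by simp [bias]; linarith, {1}, by simp [mean]; linarith, fun k hk hkJ s u => ?_⟩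
    fin_cases k <;> cases s <;> simp [profile, bias, lottery] at hk hkJ ⊢ <;> linarith
  rcases lt_or_ge t (ε⁻¹ - 5 * ε ^ 2 / 2) with h₄ | h₄
  · refine ⟨3, by simp [bias]; linarith, {3}, by simp [mean], fun k hk hkJ s u => ?_⟩
    fin_cases k <;> cases s <;> simp [profile, bias, lottery] at hk hkJ ⊢ <;> linarith
  · refine ⟨3, by simp [bias]; linarith, {3, 4}, by simp [mean]; linarith,
      fun k hk hkJ s u => ?_⟩
    fin_cases k <;> cases s <;> simp [profile, bias, lottery] at hk hkJ ⊢ <;> linarith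

end ThreeApproxTight

open ThreeApproxTight

/-- **tightness of the 3-approximation.** For every `c < 3` there is
a delegation instance with mutually independent, finitely supported values and no
outside option in which `f(A*) > c · f(A_t)` for every (nonempty) threshold menu. -/
theorem three_approximation_tight (c : ℝ) (hc : c < 3) :
    ∃ (n : ℕ) (b : Fin n → ℝ) (S : Finset (Fin n → ℝ)) (p : (Fin n → ℝ) → ℝ),
      ValidDistN S p ∧ IndepValuesN S p ∧
      ∀ g : Finset (Fin n) → (Fin n → ℝ) → Fin n, IsChoiceN n b g →
        ∃ Astar : Finset (Fin n), Astar.Nonempty ∧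
          (∀ A : Finset (Fin n), A.Nonempty → utilN S p g A ≤ utilN S p g Astar) ∧
          ∀ t : ℝ, (threshN n b t).Nonempty →
            c * utilN S p g (threshN n b t) < utilN S p g Astar := by
  set ε : ℝ := min (1 / 10) ((3 - c) / 20)
  have hε₀ : 0 < ε := lt_min (by norm_num) (by linarith)
  have hε₁ : ε ≤ 1 / 10 := min_le_left _ _
  have hεc : c ≤ 3 - 20 * ε := by linarith [min_le_right (1 / 10 : ℝ) ((3 - c) / 20)]
  refine ⟨5, bias ε, piFinset (support ε), mass ε, validDistN_mass hε₀ hε₁,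
    indepValuesN_mass hε₀.ne', fun g hg => ?_⟩
  obtain ⟨Astar, hne, hmax⟩ := exists_forall_utilN_le (piFinset (support ε)) (mass ε) g
  refine ⟨Astar, hne, hmax, fun t ht => ?_⟩
  have hopt := (le_utilN_zero_two_four hε₀ hε₁ hg).trans (hmax _ (insert_nonempty _ _))
  have hthr := utilN_threshN_le hε₀ hε₁ hg ht
  have hthr₀ := utilN_nonneg (g := g) (validDistN_mass hε₀ hε₁) (threshN 5 (bias ε) t)
  rcases le_or_gt c 0 with hc₀ | hc₀
  · nlinarith
  · nlinarith [mul_le_mul_of_nonneg_left hthr hc₀.le]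
end

section
/- For any menu A ⊆ Ω and any i ∈ A ∪ {0}, let A^i = E[v_i · 1[g(A,v) = i]] denote the contribution of action i to f(A). Then the threshold set A_{b_i} = {j ∈ Ω : b_j ≤ b_i} satisfies f(A_{b_i}) ≥ A^i. (This holds for arbitrary, possibly correlated, value distributions and a possibly randomized outside option.) -/
open Finset

/-!
Pointwise, whenever the agent picks `i` from `A ∪ {0}`, it picks from `A_{b i} ∪ {0}` an action
`j` that the principal values at least as much as `i`: either `j ∈ A_{b i}`, so `b j ≤ b i`
and the agent's preference for `j` forces `v j ≥ v i`, or `j = 0`, in which case the agent is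
indifferent between `0` and `i` and the tie-break gives `v 0 ≥ v i`. Summing over the profiles
with nonnegative weights and values gives the bound.
-/

lemma mem_insert_zero_thresh {n : ℕ} (b : Fin (n + 1) → ℝ) {t : ℝ} {i : Fin (n + 1)}
    (h : b i ≤ t) : i ∈ insert 0 (thresh n b t) := by
  rcases eq_or_ne i 0 with rfl | hi0
  · exact mem_insert_self 0 _
  · exact mem_insert_of_mem (by simp [thresh, hi0, h])

namespace IsChoice

variable {n : ℕ} {b : Fin (n + 1) → ℝ} {g : Finset (Fin (n + 1)) → Profile n → Fin (n + 1)}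

lemma le_value_of_utility_le (hg : IsChoice n b g) {A : Finset (Fin (n + 1))} {v : Profile n}
    {i : Fin (n + 1)} (hi : i ∈ insert 0 A) (h : v (g A v) + b (g A v) ≤ v i + b i) :
    v i ≤ v (g A v) :=
  (hg A v).2.2 i hi (le_antisymm ((hg A v).2.1 i hi) h)

lemma value_le_value_thresh (hg : IsChoice n b g) {A : Finset (Fin (n + 1))} {v : Profile n}
    {i : Fin (n + 1)} (hgi : g A v = i) : v i ≤ v (g (thresh n b (b i)) v) := by
  set T := thresh n b (b i)
  have hiT : i ∈ insert 0 T := mem_insert_zero_thresh b le_rfl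
  rcases mem_insert.mp (hg T v).1 with h0 | hT
  · have hprefA : v 0 + b 0 ≤ v i + b i := hgi ▸ (hg A v).2.1 0 (mem_insert_self 0 A)
    exact hg.le_value_of_utility_le hiT (h0 ▸ hprefA)
  · have hb : b (g T v) ≤ b i := (mem_filter.mp hT).2.2
    linarith [(hg T v).2.1 i hiT]

end IsChoice

theorem threshold_secures_single_action_general {n : ℕ} (b : Fin (n + 1) → ℝ)
    (S : Finset (Profile n)) (p : Profile n → ℝ) (hdist : ValidDist S p)
    (g : Finset (Fin (n + 1)) → Profile n → Fin (n + 1)) (hg : IsChoice n b g)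
    (A : Finset (Fin (n + 1)))
    (i : Fin (n + 1)) :
    (∑ v ∈ S.filter fun v => g A v = i, p v * v i)
      ≤ util S p g (thresh n b (b i)) := by
  obtain ⟨hp, -, hv⟩ := hdist
  set T := thresh n b (b i)
  calc (∑ v ∈ S.filter fun v => g A v = i, p v * v i)
      ≤ ∑ v ∈ S.filter fun v => g A v = i, p v * v (g T v) := by
        refine sum_le_sum fun v hvi => ?_
        obtain ⟨hvS, hgi⟩ := mem_filter.mp hvi
        exact mul_le_mul_of_nonneg_left (hg.value_le_value_thresh hgi) (hp v hvS)
    _ ≤ ∑ v ∈ S, p v * v (g T v) :=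
        sum_le_sum_of_subset_of_nonneg (filter_subset _ _)
          fun v hvS _ => mul_nonneg (hp v hvS) (hv v hvS _)

/-- **single-action lemma.** For any menu `A ⊆ Ω` and any
`i ∈ A ∪ {0}`, the threshold menu `A_{b i}` secures the contribution
`A^i = E[v i · 1[g(A,v) = i]]` of action `i` to `f(A)`.  This holds for
arbitrary, possibly correlated value distributions and a possibly randomized
outside option. -/
theorem threshold_secures_single_action {n : ℕ} (b : Fin (n + 1) → ℝ)
    (S : Finset (Profile n)) (p : Profile n → ℝ) (hdist : ValidDist S p)
    (g : Finset (Fin (n + 1)) → Profile n → Fin (n + 1)) (hg : IsChoice n b g)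
    (A : Finset (Fin (n + 1))) (hA : (0 : Fin (n + 1)) ∉ A)
    (i : Fin (n + 1)) (hi : i ∈ insert 0 A) :
    (∑ v ∈ S.filter fun v => g A v = i, p v * v i)
      ≤ util S p g (thresh n b (b i)) :=
  threshold_secures_single_action_general b S p hdist g hg A i
end

section
/- Assume the values v_0, v_1, …, v_n are mutually independent (the outside option's value may be randomized), all values have finite support, and every action in the optimal set A* is selected with positive probability. For every integer α ≥ 4: if f(A*) > 16α · f(A_t) for every threshold t ∈ ℝ, then there is an action whose value takes, with positive probability, a value at least ((α−2)^{α−1}/(8α)) · f(A*). Equivalently, writing v_max for the largest value in any action's support and ρ = v_max/f(A*), the best threshold is an O(log ρ / log log ρ)-approximation to f(A*). -/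
open Finset

/-!
Fix `c` with `f(A_t) ≤ c` for every `t`. For a profile `v` let `U` be the agent's best utility
over `A*`, `M` the best value among the actions of `A*` attaining it (`topUtility`, `topValue`)
and `β` the largest bias in `A* ∪ {0}`. The principal receives at most `v₀ + M`, with `M` counted
only when the outside option does not beat `A*` (`valueOn`), and `E[v₀] ≤ c` via the empty menu.

Call an action outside `A*` blocking at level `s` in `A_t` if its agent utility exceeds `s`.
If `U - M ≤ t` and nothing blocks at level `U`, the agent picks a value `≥ M` from `A_t`; since the
blockers are independent of the coordinates in `A* ∪ {0}`, the profiles whose blocking probability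
is at most `1/2` contribute at most `2c`. A blocked profile instead pays `s - t` in `A_t` as soon
as the outside option stays below `s`, so by independence again
`(s - t) · P(blocked) · P(v₀ + b₀ ≤ s) ≤ c`.

The mass of `M` is split into: `M < U - β + 4c`, paid by `E[(U - β)⁺] ≤ c`; `U > β + 2c`, where
blocking in `A_β` has probability below `1/2`; and geometric shells `4c·r^j ≤ M < 4c·r^(j+1)`
with `t_j = β + 2c - 4c·r^j`. A shell with blocking probability at most `1/2` costs `2c`; on the
blocked shells `M · P(v₀ + b₀ ≤ U) ≤ 4rc` pointwise, so together they cost `4rc`. When every value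
is below `4c·r^k` this gives `f(A*) ≤ (8 + 2k + 4r)c`, and `r = α - 2`, `k = α - 1`,
`c = f(A*)/(16α)` turn it into `16α ≤ 6α - 2`.
-/

noncomputable section

namespace Delegation

open Classical

variable {n : ℕ}

def expectation (S : Finset (Profile n)) (p : Profile n → ℝ) (φ : Profile n → ℝ) : ℝ :=
  ∑ v ∈ S, p v * φ v

def prob (S : Finset (Profile n)) (p : Profile n → ℝ) (P : Profile n → Prop) [DecidablePred P] :
    ℝ :=
  expectation S p fun v => if P v then 1 else 0

section Expectation

variable {S : Finset (Profile n)} {p : Profile n → ℝ}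

lemma expectation_mono (hp : ∀ v ∈ S, 0 ≤ p v) {φ ψ : Profile n → ℝ}
    (h : ∀ v ∈ S, 0 < p v → φ v ≤ ψ v) : expectation S p φ ≤ expectation S p ψ := by
  refine sum_le_sum fun v hv => ?_
  rcases (hp v hv).lt_or_eq with hpv | hpv
  · exact mul_le_mul_of_nonneg_left (h v hv hpv) hpv.le
  · simp [← hpv]

lemma expectation_add (φ ψ : Profile n → ℝ) :
    expectation S p (fun v => φ v + ψ v) = expectation S p φ + expectation S p ψ := by
  simp only [expectation, mul_add, sum_add_distrib]

lemma expectation_sum {ι : Type*} (J : Finset ι) (φ : ι → Profile n → ℝ) :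
    expectation S p (fun v => ∑ j ∈ J, φ j v) = ∑ j ∈ J, expectation S p (φ j) := by
  simp only [expectation, mul_sum]
  exact sum_comm

lemma expectation_const_mul (c : ℝ) (φ : Profile n → ℝ) :
    expectation S p (fun v => c * φ v) = c * expectation S p φ := by
  simp only [expectation, mul_sum]
  exact sum_congr rfl fun v _ => mul_left_comm _ _ _

lemma expectation_const (h1 : ∑ v ∈ S, p v = 1) (c : ℝ) : expectation S p (fun _ => c) = c := by
  simp [expectation, ← sum_mul, h1]

lemma prob_nonneg (hp : ∀ v ∈ S, 0 ≤ p v) (P : Profile n → Prop) [DecidablePred P] :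
    0 ≤ prob S p P :=
  sum_nonneg fun v hv => mul_nonneg (hp v hv) (by dsimp only; split_ifs <;> norm_num)

lemma prob_not (h1 : ∑ v ∈ S, p v = 1) (P : Profile n → Prop) [DecidablePred P] :
    prob S p (fun v => ¬ P v) = 1 - prob S p P := by
  simp only [prob, expectation, ite_not, mul_ite, mul_one, mul_zero, sum_ite, sum_const_zero,
    add_zero, zero_add]
  rw [← h1, ← sum_filter_add_sum_filter_not S P]
  ring

end Expectation

section Independence

variable {S : Finset (Profile n)} {p : Profile n → ℝ}

def marginal (S : Finset (Profile n)) (p : Profile n → ℝ) (i : Fin (n + 1)) (x : ℝ) : ℝ :=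
  ∑ v ∈ S with v i = x, p v

def grid (S : Finset (Profile n)) : Finset (Profile n) :=
  Fintype.piFinset fun i => S.image (· i)

lemma subset_grid : S ⊆ grid S :=
  fun _ hv => Fintype.mem_piFinset.2 fun _ => mem_image_of_mem _ hv

lemma piecewise_mem_grid (B : Finset (Fin (n + 1))) {x y : Profile n} (hx : x ∈ grid S)
    (hy : y ∈ grid S) : B.piecewise x y ∈ grid S := by
  rw [grid, Fintype.mem_piFinset] at *
  intro i
  by_cases hi : i ∈ B <;> simp [hi, hx i, hy i]

lemma prod_marginal_eq (hindep : IndepValues S p) (w : Profile n) :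
    ∏ i, marginal S p i (w i) = if w ∈ S then p w else 0 := by
  simp only [marginal]
  rw [← hindep w, filter_eq' S w]
  split_ifs <;> simp

lemma expectation_eq_sum_grid (hindep : IndepValues S p) (H : Profile n → ℝ) :
    expectation S p H = ∑ w ∈ grid S, (∏ i, marginal S p i (w i)) * H w := by
  refine sum_subset_zero_on_sdiff subset_grid (fun w hw => ?_) (fun w hw => ?_)
  · rw [prod_marginal_eq hindep, if_neg (mem_sdiff.1 hw).2, zero_mul]
  · rw [prod_marginal_eq hindep, if_pos hw]

lemma prod_marginal_piecewise (B : Finset (Fin (n + 1))) (x y : Profile n) :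
    (∏ i, marginal S p i (B.piecewise x y i)) * ∏ i, marginal S p i (B.piecewise y x i) =
      (∏ i, marginal S p i (x i)) * ∏ i, marginal S p i (y i) := by
  rw [← prod_mul_distrib, ← prod_mul_distrib]
  refine prod_congr rfl fun i _ => ?_
  by_cases hi : i ∈ B <;> simp [hi, mul_comm]

/-- Exchanging the coordinates outside `B` between `x` and `y` is an involution of
`grid S ×ˢ grid S` that preserves the product weight. -/
lemma sum_grid_sum_grid_piecewise (B : Finset (Fin (n + 1))) (H : Profile n → ℝ) :
    ∑ x ∈ grid S, ∑ y ∈ grid S,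
        (∏ i, marginal S p i (x i)) * (∏ i, marginal S p i (y i)) * H (B.piecewise x y) =
      ∑ x ∈ grid S, ∑ y ∈ grid S,
        (∏ i, marginal S p i (x i)) * (∏ i, marginal S p i (y i)) * H x := by
  simp only [← sum_product']
  set σ : Profile n × Profile n → Profile n × Profile n :=
    fun z => (B.piecewise z.1 z.2, B.piecewise z.2 z.1)
  have hσ : ∀ z ∈ grid S ×ˢ grid S, σ z ∈ grid S ×ˢ grid S := fun z hz => by
    rw [mem_product] at hz ⊢
    exact ⟨piecewise_mem_grid B hz.1 hz.2, piecewise_mem_grid B hz.2 hz.1⟩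
  have hσσ : ∀ z, σ (σ z) = z := fun z => by
    ext i <;> by_cases hi : i ∈ B <;> simp [σ, hi]
  exact sum_nbij' σ σ (fun z hz => hσ z hz) (fun z hz => hσ z hz) (fun z _ => hσσ z)
    (fun z _ => hσσ z) fun z _ => by rw [prod_marginal_piecewise]

theorem expectation_eq_expectation_piecewise (hdist : ValidDist S p)
    (hindep : IndepValues S p) (B : Finset (Fin (n + 1))) (H : Profile n → ℝ) :
    expectation S p H = expectation S p fun x => expectation S p fun y => H (B.piecewise x y) := by
  have hmass : ∑ w ∈ grid S, ∏ i, marginal S p i (w i) = 1 := by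
    simpa [expectation_const hdist.2.1] using (expectation_eq_sum_grid hindep fun _ => 1).symm
  calc expectation S p H
      = ∑ x ∈ grid S, (∏ i, marginal S p i (x i)) * H x := expectation_eq_sum_grid hindep H
    _ = ∑ x ∈ grid S, ∑ y ∈ grid S,
          (∏ i, marginal S p i (x i)) * (∏ i, marginal S p i (y i)) * H x := by
        refine sum_congr rfl fun x _ => ?_
        rw [← sum_mul, ← mul_sum, hmass, mul_one]
    _ = ∑ x ∈ grid S, ∑ y ∈ grid S,
          (∏ i, marginal S p i (x i)) * (∏ i, marginal S p i (y i)) * H (B.piecewise x y) :=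
        (sum_grid_sum_grid_piecewise B H).symm
    _ = _ := by
        rw [expectation_eq_sum_grid hindep]
        refine sum_congr rfl fun x _ => ?_
        rw [expectation_eq_sum_grid hindep, mul_sum]
        exact sum_congr rfl fun y _ => by ring

theorem expectation_mul_eq (hdist : ValidDist S p) (hindep : IndepValues S p)
    (B : Finset (Fin (n + 1))) {F κ : Profile n → ℝ} {G : ℝ → Profile n → ℝ}
    (hF : DependsOn F B) (hκ : DependsOn κ B) (hG : ∀ s, DependsOn (G s) (↑B)ᶜ) :
    expectation S p (fun v => F v * G (κ v) v) =
      expectation S p (fun v => F v * expectation S p (G (κ v))) := by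
  have hB : ∀ x y : Profile n, ∀ i ∈ (B : Set (Fin (n + 1))), B.piecewise x y i = x i :=
    fun x y i hi => piecewise_eq_of_mem _ _ _ hi
  have hBc : ∀ x y : Profile n, ∀ i ∈ (↑B : Set (Fin (n + 1)))ᶜ, B.piecewise x y i = y i :=
    fun x y i hi => piecewise_eq_of_notMem _ _ _ hi
  rw [expectation_eq_expectation_piecewise hdist hindep B]
  refine sum_congr rfl fun x _ => ?_
  simp only [hF (hB x _), hκ (hB x _), hG _ (hBc x _), expectation_const_mul]

lemma dependsOn_indicator {P : Profile n → Prop} [DecidablePred P] {s : Set (Fin (n + 1))}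
    (hP : DependsOn P s) :
    DependsOn (fun v => if P v then (1 : ℝ) else 0) s :=
  fun _ _ h => by simp only [hP h]

lemma prob_and_eq_mul (hdist : ValidDist S p) (hindep : IndepValues S p)
    (B : Finset (Fin (n + 1))) {P Q : Profile n → Prop} [DecidablePred P] [DecidablePred Q]
    (hP : DependsOn P B) (hQ : DependsOn Q (↑B)ᶜ) : prob S p (fun v => P v ∧ Q v) = prob S p P * prob S p Q := by
  have h := expectation_mul_eq hdist hindep B (dependsOn_indicator hP)
    (κ := fun _ => 0) (fun _ _ _ => rfl) (G := fun _ => _) fun _ => dependsOn_indicator hQ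
  rw [prob, prob, prob, mul_comm, ← expectation_const_mul]
  simp only [mul_comm (expectation S p _)]
  rw [← h]
  refine sum_congr rfl fun v _ => ?_
  dsimp only
  split_ifs <;> simp_all

end Independence

section Choice

variable {b : Fin (n + 1) → ℝ} {g : Finset (Fin (n + 1)) → Profile n → Fin (n + 1)}

@[simp] lemma mem_thresh {t : ℝ} {i : Fin (n + 1)} : i ∈ thresh n b t ↔ i ≠ 0 ∧ b i ≤ t := by
  simp [thresh]

lemma exists_thresh_eq_empty (b : Fin (n + 1) → ℝ) : ∃ t, thresh n b t = ∅ := by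
  refine ⟨(univ.image b).min' (image_nonempty.2 univ_nonempty) - 1,
    eq_empty_of_forall_notMem fun i hi => ?_⟩
  have := min'_le _ _ (mem_image_of_mem b (mem_univ i))
  linarith [(mem_thresh.1 hi).2]

lemma choice_mem (hg : IsChoice n b g) (A : Finset (Fin (n + 1))) (v : Profile n) :
    g A v ∈ insert 0 A :=
  (hg A v).1

lemma utility_le_choice (hg : IsChoice n b g) {A : Finset (Fin (n + 1))} (v : Profile n)
    {j : Fin (n + 1)} (hj : j ∈ insert 0 A) : v j + b j ≤ v (g A v) + b (g A v) :=
  (hg A v).2.1 j hj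

lemma value_le_choice (hg : IsChoice n b g) {A : Finset (Fin (n + 1))} {v : Profile n}
    {j : Fin (n + 1)} (hj : j ∈ insert 0 A) (hmax : ∀ k ∈ insert 0 A, v k + b k ≤ v j + b j) :
    v j ≤ v (g A v) :=
  (hg A v).2.2 j hj <| le_antisymm (utility_le_choice hg v hj) (hmax _ (choice_mem hg A v))

lemma bias_choice_le (hg : IsChoice n b g) {t : ℝ} {v : Profile n}
    (h : g (thresh n b t) v ≠ 0 ∨ b 0 ≤ t) : b (g (thresh n b t) v) ≤ t := by
  rcases mem_insert.1 (choice_mem hg (thresh n b t) v) with h0 | hmem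
  · rw [h0] at h ⊢
    exact h.resolve_left (not_not.2 rfl)
  · exact (mem_thresh.1 hmem).2

end Choice

section Bias

variable (b : Fin (n + 1) → ℝ) (A : Finset (Fin (n + 1)))

def maxBias : ℝ := (insert 0 A).sup' (insert_nonempty 0 A) b

def Blocked (t s : ℝ) (v : Profile n) : Prop :=
  ∃ k ∈ thresh n b t \ A, s < v k + b k

variable {b A}

lemma le_maxBias {j : Fin (n + 1)} (hj : j ∈ insert 0 A) : b j ≤ maxBias b A :=
  le_sup' b hj

end Bias

section TopOfMenu

variable (b : Fin (n + 1) → ℝ) {A : Finset (Fin (n + 1))} (hA : A.Nonempty)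

def topUtility (v : Profile n) : ℝ := A.sup' hA fun i => v i + b i

lemma exists_topUtility_eq (v : Profile n) : ∃ j ∈ A, v j + b j = topUtility b hA v := by
  obtain ⟨j, hj, h⟩ := exists_mem_eq_sup' hA fun i => v i + b i
  exact ⟨j, hj, h.symm⟩

def topValue (v : Profile n) : ℝ :=
  (A.filter fun i => v i + b i = topUtility b hA v).sup'
    (let ⟨j, hj, h⟩ := exists_topUtility_eq b hA v; ⟨j, mem_filter.2 ⟨hj, h⟩⟩) fun i => v i

def valueOn (R : ℝ → ℝ → Prop) (v : Profile n) : ℝ :=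
  if R (topUtility b hA v) (topValue b hA v) ∧ v 0 + b 0 ≤ topUtility b hA v then
    topValue b hA v else 0

variable {b hA}

lemma le_topUtility {v : Profile n} {j : Fin (n + 1)} (hj : j ∈ A) :
    v j + b j ≤ topUtility b hA v :=
  le_sup' (fun i => v i + b i) hj

lemma le_topValue {v : Profile n} {j : Fin (n + 1)} (hj : j ∈ A)
    (h : v j + b j = topUtility b hA v) : v j ≤ topValue b hA v :=
  le_sup' (fun i => v i) (mem_filter.2 ⟨hj, h⟩)

lemma exists_topValue_eq (v : Profile n) :
    ∃ j ∈ A, v j + b j = topUtility b hA v ∧ v j = topValue b hA v := by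
  obtain ⟨j, hj, h⟩ := exists_mem_eq_sup' _ fun i => v i
  exact ⟨j, (mem_filter.1 hj).1, (mem_filter.1 hj).2, h.symm⟩

lemma topValue_nonneg {v : Profile n} (hv : ∀ i, 0 ≤ v i) : 0 ≤ topValue b hA v := by
  obtain ⟨j, -, -, h⟩ := exists_topValue_eq (hA := hA) v
  exact h ▸ hv j

lemma dependsOn_topUtility : DependsOn (topUtility b hA) A := fun v w h =>
  sup'_congr hA rfl fun i hi => by rw [h i hi]

lemma dependsOn_topValue : DependsOn (topValue b hA) A := fun v w h =>
  sup'_congr _ (filter_congr fun i hi => by rw [h i hi, dependsOn_topUtility h])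
    fun i hi => h i (mem_filter.1 hi).1

lemma maxBias_le_topUtility {v : Profile n} (hv : ∀ i, 0 ≤ v i)
    (h0 : v 0 + b 0 ≤ topUtility b hA v) : maxBias b A ≤ topUtility b hA v :=
  sup'_le _ _ fun i hi => by
    rcases mem_insert.1 hi with rfl | hi
    · linarith [hv 0]
    · linarith [hv i, le_topUtility (b := b) (hA := hA) (v := v) hi]

lemma topUtility_sub_topValue_le_maxBias (v : Profile n) :
    topUtility b hA v - topValue b hA v ≤ maxBias b A := by
  obtain ⟨j, hj, hU, hM⟩ := exists_topValue_eq (b := b) (hA := hA) v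
  linarith [le_maxBias (b := b) (mem_insert_of_mem hj)]

lemma valueOn_nonneg (R : ℝ → ℝ → Prop) {v : Profile n} (hv : ∀ i, 0 ≤ v i) :
    0 ≤ valueOn b hA R v := by
  unfold valueOn
  split_ifs
  exacts [topValue_nonneg hv, le_rfl]

lemma valueOn_of {R : ℝ → ℝ → Prop} {v : Profile n}
    (hR : R (topUtility b hA v) (topValue b hA v)) (h0 : v 0 + b 0 ≤ topUtility b hA v) :
    valueOn b hA R v = topValue b hA v :=
  if_pos ⟨hR, h0⟩

lemma dependsOn_valueOn (R : ℝ → ℝ → Prop) : DependsOn (valueOn b hA R) ↑(insert 0 A) :=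
  fun v w h => by
    have hA' : ∀ i ∈ (A : Set (Fin (n + 1))), v i = w i := fun i hi => h i (by simp [hi])
    simp only [valueOn, dependsOn_topUtility hA', dependsOn_topValue hA', h 0 (by simp)]

lemma dependsOn_blocked (t s : ℝ) : DependsOn (Blocked b A t s) (↑(insert 0 A))ᶜ := by
  intro v w h
  have hk : ∀ k ∈ thresh n b t \ A, v k = w k := fun k hk => h k <| by
    obtain ⟨hkt, hkA⟩ := mem_sdiff.1 hk
    simp [hkA, (mem_thresh.1 hkt).1]
  simp only [Blocked]
  exact propext <| exists_congr fun k => and_congr_right fun hk' => by rw [hk k hk']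

end TopOfMenu

section Capture

variable {b : Fin (n + 1) → ℝ} {g : Finset (Fin (n + 1)) → Profile n → Fin (n + 1)}
  {A : Finset (Fin (n + 1))}

lemma choice_value_le_add_valueOn (hg : IsChoice n b g) (hA : A.Nonempty) {v : Profile n}
    (hv : ∀ i, 0 ≤ v i) : v (g A v) ≤ v 0 + valueOn b hA (fun _ _ => True) v := by
  rcases mem_insert.1 (choice_mem hg A v) with h0 | hk
  · rw [h0]
    linarith [valueOn_nonneg (b := b) (hA := hA) (fun _ _ => True) hv]
  · have hkU : v (g A v) + b (g A v) = topUtility b hA v :=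
      le_antisymm (le_topUtility hk)
        (sup'_le _ _ fun j hj => utility_le_choice hg v (mem_insert_of_mem hj))
    have h0U : v 0 + b 0 ≤ topUtility b hA v := hkU ▸ utility_le_choice hg v (mem_insert_self 0 A)
    rw [valueOn_of trivial h0U]
    linarith [le_topValue hk hkU, hv 0]

lemma topValue_le_choice (hg : IsChoice n b g) (h0A : 0 ∉ A) (hA : A.Nonempty) {t : ℝ}
    {v : Profile n} (h0 : v 0 + b 0 ≤ topUtility b hA v)
    (ht : topUtility b hA v - topValue b hA v ≤ t)
    (hclear : ¬ Blocked b A t (topUtility b hA v) v) :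
    topValue b hA v ≤ v (g (thresh n b t) v) := by
  obtain ⟨j, hjA, hjU, hjM⟩ := exists_topValue_eq (b := b) (hA := hA) v
  have hjt : j ∈ thresh n b t := mem_thresh.2 ⟨ne_of_mem_of_not_mem hjA h0A, by linarith⟩
  rw [← hjM]
  refine value_le_choice hg (mem_insert_of_mem hjt) fun k hk => ?_
  rw [hjU]
  rcases mem_insert.1 hk with rfl | hk
  · exact h0
  by_cases hkA : k ∈ A
  · exact le_topUtility hkA
  · exact not_lt.1 fun hlt => hclear ⟨k, mem_sdiff.2 ⟨hk, hkA⟩, hlt⟩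

lemma sub_le_choice_of_blocked (hg : IsChoice n b g) {t s : ℝ} {v : Profile n}
    (hB : Blocked b A t s v) (h0 : v 0 + b 0 ≤ s ∨ b 0 ≤ t) :
    s - t ≤ v (g (thresh n b t) v) := by
  obtain ⟨k, hk, hks⟩ := hB
  have hu := utility_le_choice hg v (mem_insert_of_mem (mem_sdiff.1 hk).1)
  have hb : b (g (thresh n b t) v) ≤ t := bias_choice_le hg <| h0.imp_left fun h0 hg0 => by
    rw [hg0] at hu
    linarith
  linarith

lemma topUtility_sub_maxBias_le_choice (hg : IsChoice n b g) (h0A : 0 ∉ A) (hA : A.Nonempty)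
    (v : Profile n) : topUtility b hA v - maxBias b A ≤ v (g (thresh n b (maxBias b A)) v) := by
  obtain ⟨j, hj, hjU⟩ := exists_topUtility_eq b hA v
  have hjt : j ∈ thresh n b (maxBias b A) :=
    mem_thresh.2 ⟨ne_of_mem_of_not_mem hj h0A, le_maxBias (mem_insert_of_mem hj)⟩
  have hu := utility_le_choice hg v (mem_insert_of_mem hjt)
  have hb := bias_choice_le hg (v := v) (Or.inr (le_maxBias (b := b) (mem_insert_self 0 A)))
  linarith

end Capture

lemma exists_le_lt_succ (w : ℕ → ℝ) {x : ℝ} (h0 : w 0 ≤ x) {m : ℕ} (hm : x < w m) :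
    ∃ j < m, w j ≤ x ∧ x < w (j + 1) := by
  induction m with
  | zero => exact absurd h0 (not_le.2 hm)
  | succ m ih =>
    by_cases h : x < w m
    · obtain ⟨j, hj, hjx⟩ := ih h
      exact ⟨j, hj.trans m.lt_succ_self, hjx⟩
    · exact ⟨m, m.lt_succ_self, not_lt.1 h, hm⟩

section ThresholdBound

variable {S : Finset (Profile n)} {p : Profile n → ℝ} {b : Fin (n + 1) → ℝ}
  {g : Finset (Fin (n + 1)) → Profile n → Fin (n + 1)} {A : Finset (Fin (n + 1))} {c : ℝ}

lemma util_nonneg (hdist : ValidDist S p) (A : Finset (Fin (n + 1))) : 0 ≤ util S p g A :=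
  sum_nonneg fun v hv => mul_nonneg (hdist.1 v hv) (hdist.2.2 v hv _)

lemma util_empty (hg : IsChoice n b g) : util S p g ∅ = expectation S p fun v => v 0 := by
  refine sum_congr rfl fun v _ => ?_
  rw [mem_singleton.1 (choice_mem hg ∅ v)]

lemma util_empty_le (hthr : ∀ t, util S p g (thresh n b t) ≤ c) : util S p g ∅ ≤ c := by
  obtain ⟨t, ht⟩ := exists_thresh_eq_empty b
  exact ht ▸ hthr t

lemma expectation_le_of_le_choice (hdist : ValidDist S p)
    (hthr : ∀ t, util S p g (thresh n b t) ≤ c) (t : ℝ) {φ : Profile n → ℝ}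
    (h : ∀ v ∈ S, φ v ≤ v (g (thresh n b t) v)) : expectation S p φ ≤ c :=
  (expectation_mono hdist.1 fun v hv _ => h v hv).trans (hthr t)

lemma util_le_util_empty_add (hdist : ValidDist S p) (hg : IsChoice n b g) (hA : A.Nonempty) :
    util S p g A ≤ util S p g ∅ + expectation S p (valueOn b hA fun _ _ => True) := by
  rw [util_empty hg, ← expectation_add]
  exact expectation_mono hdist.1 fun v hv _ => choice_value_le_add_valueOn hg hA (hdist.2.2 v hv)

lemma expectation_excess_le (hdist : ValidDist S p) (hg : IsChoice n b g) (h0A : 0 ∉ A)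
    (hA : A.Nonempty) (hthr : ∀ t, util S p g (thresh n b t) ≤ c) :
    expectation S p (fun v => max (topUtility b hA v - maxBias b A) 0) ≤ c :=
  expectation_le_of_le_choice hdist hthr _ fun v hv =>
    max_le (topUtility_sub_maxBias_le_choice hg h0A hA v) (hdist.2.2 v hv _)

lemma mul_prob_blocked_le (hdist : ValidDist S p) (hg : IsChoice n b g)
    (hthr : ∀ t, util S p g (thresh n b t) ≤ c) {t s : ℝ} {Q : Profile n → Prop}
    (hQ : ∀ v, Q v → v 0 + b 0 ≤ s ∨ b 0 ≤ t) :
    (s - t) * prob S p (fun v => Q v ∧ Blocked b A t s v) ≤ c := by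
  rw [prob, ← expectation_const_mul]
  refine expectation_le_of_le_choice hdist hthr t fun v hv => ?_
  split_ifs with h
  · rw [mul_one]
    exact sub_le_choice_of_blocked hg h.2 (hQ v h.1)
  · rw [mul_zero]
    exact hdist.2.2 v hv _

lemma le_maxBias_add_of_half_lt (hdist : ValidDist S p) (hg : IsChoice n b g)
    (hthr : ∀ t, util S p g (thresh n b t) ≤ c) {s : ℝ}
    (h : 1 / 2 < prob S p (Blocked b A (maxBias b A) s)) : s ≤ maxBias b A + 2 * c := by
  have hc := (util_nonneg hdist _).trans (hthr 0)
  by_contra! hs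
  have hpair := mul_prob_blocked_le (A := A) hdist hg hthr (s := s) (Q := fun _ => True)
    fun _ _ => Or.inr (le_maxBias (mem_insert_self 0 A))
  simp only [true_and] at hpair
  nlinarith [mul_lt_mul_of_pos_left h (show 0 < s - maxBias b A by linarith)]

lemma mul_prob_outside_le (hdist : ValidDist S p) (hindep : IndepValues S p)
    (hg : IsChoice n b g) (hthr : ∀ t, util S p g (thresh n b t) ≤ c) {s w : ℝ}
    (hs : maxBias b A ≤ s) (hw : 4 * c ≤ w)
    (h : 1 / 2 < prob S p (Blocked b A (maxBias b A + 2 * c - w) s)) :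
    w * prob S p (fun v => v 0 + b 0 ≤ s) ≤ 4 * c := by
  have hc := (util_nonneg hdist _).trans (hthr 0)
  have hpair := mul_prob_blocked_le (A := A) hdist hg hthr (t := maxBias b A + 2 * c - w)
    (s := s) (Q := fun v => v 0 + b 0 ≤ s) fun _ => Or.inl
  rw [prob_and_eq_mul hdist hindep {0} (fun v w h => by rw [h 0 (by simp)])
    ((dependsOn_blocked _ _).mono (by simp))] at hpair
  have hO := prob_nonneg hdist.1 fun v => v 0 + b 0 ≤ s
  have : w / 2 * (prob S p (fun v => v 0 + b 0 ≤ s) * (1 / 2)) ≤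
      (s - (maxBias b A + 2 * c - w)) * (prob S p (fun v => v 0 + b 0 ≤ s) *
        prob S p (Blocked b A (maxBias b A + 2 * c - w) s)) :=
    mul_le_mul (by linarith) (mul_le_mul_of_nonneg_left h.le hO) (by positivity) (by linarith)
  linarith

lemma expectation_valueOn_le_of_unblocked (hdist : ValidDist S p) (hindep : IndepValues S p)
    (hg : IsChoice n b g) (h0A : 0 ∉ A) (hA : A.Nonempty)
    (hthr : ∀ t, util S p g (thresh n b t) ≤ c) (t : ℝ) {R : ℝ → ℝ → Prop}
    (hR : ∀ v, R (topUtility b hA v) (topValue b hA v) →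
      topUtility b hA v - topValue b hA v ≤ t ∧
        prob S p (Blocked b A t (topUtility b hA v)) ≤ 1 / 2) :
    expectation S p (valueOn b hA R) ≤ 2 * c := by
  have hhalf : ∀ v ∈ S, valueOn b hA R v ≤
      2 * (valueOn b hA R v * prob S p fun w => ¬ Blocked b A t (topUtility b hA v) w) := by
    intro v hv
    rw [prob_not hdist.2.1]
    unfold valueOn
    split_ifs with h
    · nlinarith [(hR v h.1).2, topValue_nonneg (b := b) (hA := hA) (hdist.2.2 v hv)]
    · simp
  have hindep' := expectation_mul_eq hdist hindep (insert 0 A) (F := valueOn b hA R)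
    (κ := topUtility b hA) (G := fun s w => if ¬ Blocked b A t s w then 1 else 0)
    (dependsOn_valueOn R) (dependsOn_topUtility.mono (coe_subset.2 (subset_insert 0 A)))
    fun s => dependsOn_indicator fun v w h => congrArg Not (dependsOn_blocked t s h)
  calc expectation S p (valueOn b hA R)
      ≤ expectation S p (fun v =>
          2 * (valueOn b hA R v * prob S p fun w => ¬ Blocked b A t (topUtility b hA v) w)) :=
        expectation_mono hdist.1 fun v hv _ => hhalf v hv
    _ = 2 * expectation S p (fun v =>
          valueOn b hA R v * if ¬ Blocked b A t (topUtility b hA v) v then 1 else 0) := by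
        rw [expectation_const_mul, hindep']
        rfl
    _ ≤ 2 * c := by
        gcongr
        refine expectation_le_of_le_choice hdist hthr t fun v hv => ?_
        unfold valueOn
        by_cases h : R (topUtility b hA v) (topValue b hA v) ∧ v 0 + b 0 ≤ topUtility b hA v
        · by_cases hB : Blocked b A t (topUtility b hA v) v
          · simpa [h, hB] using hdist.2.2 v hv _
          · simpa [h, hB] using topValue_le_choice hg h0A hA h.2 (hR v h.1).1 hB
        · simpa [h] using hdist.2.2 v hv _

def IsLow (b : Fin (n + 1) → ℝ) (A : Finset (Fin (n + 1))) (c u m : ℝ) : Prop :=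
  m < u - maxBias b A + 4 * c

def IsHigh (b : Fin (n + 1) → ℝ) (A : Finset (Fin (n + 1))) (c u _m : ℝ) : Prop :=
  maxBias b A + 2 * c < u

def IsClearShell (S : Finset (Profile n)) (p : Profile n → ℝ) (b : Fin (n + 1) → ℝ)
    (A : Finset (Fin (n + 1))) (c w u m : ℝ) : Prop :=
  u ≤ maxBias b A + 2 * c ∧ w ≤ m ∧ prob S p (Blocked b A (maxBias b A + 2 * c - w) u) ≤ 1 / 2

def IsBlockedShell (S : Finset (Profile n)) (p : Profile n → ℝ) (b : Fin (n + 1) → ℝ)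
    (A : Finset (Fin (n + 1))) (c r u m : ℝ) : Prop :=
  maxBias b A ≤ u ∧ ∃ w, 4 * c ≤ w ∧ m < r * w ∧
    1 / 2 < prob S p (Blocked b A (maxBias b A + 2 * c - w) u)

lemma expectation_valueOn_low_le (hdist : ValidDist S p) (hg : IsChoice n b g) (h0A : 0 ∉ A)
    (hA : A.Nonempty) (hthr : ∀ t, util S p g (thresh n b t) ≤ c) :
    expectation S p (valueOn b hA (IsLow b A c)) ≤ 5 * c := by
  have hc := (util_nonneg hdist _).trans (hthr 0)
  calc expectation S p (valueOn b hA (IsLow b A c))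
      ≤ expectation S p (fun v => max (topUtility b hA v - maxBias b A) 0 + 4 * c) :=
        expectation_mono hdist.1 fun v _ _ => by
          unfold valueOn IsLow
          split_ifs with h
          · linarith [le_max_left (topUtility b hA v - maxBias b A) 0, h.1]
          · linarith [le_max_right (topUtility b hA v - maxBias b A) 0]
    _ ≤ c + 4 * c := by
        rw [expectation_add, expectation_const hdist.2.1]
        linarith [expectation_excess_le hdist hg h0A hA hthr]
    _ = 5 * c := by ring

lemma expectation_valueOn_high_le (hdist : ValidDist S p) (hindep : IndepValues S p)
    (hg : IsChoice n b g) (h0A : 0 ∉ A) (hA : A.Nonempty)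
    (hthr : ∀ t, util S p g (thresh n b t) ≤ c) :
    expectation S p (valueOn b hA (IsHigh b A c)) ≤ 2 * c :=
  expectation_valueOn_le_of_unblocked hdist hindep hg h0A hA hthr _ fun v hv =>
    ⟨topUtility_sub_topValue_le_maxBias v,
      not_lt.1 fun h => (le_maxBias_add_of_half_lt hdist hg hthr h).not_gt hv⟩

lemma expectation_valueOn_clearShell_le (hdist : ValidDist S p) (hindep : IndepValues S p)
    (hg : IsChoice n b g) (h0A : 0 ∉ A) (hA : A.Nonempty)
    (hthr : ∀ t, util S p g (thresh n b t) ≤ c) (w : ℝ) :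
    expectation S p (valueOn b hA (IsClearShell S p b A c w)) ≤ 2 * c :=
  expectation_valueOn_le_of_unblocked hdist hindep hg h0A hA hthr _ fun _ hv =>
    ⟨by linarith [hv.1, hv.2.1], hv.2.2⟩

lemma expectation_valueOn_blockedShell_le (hdist : ValidDist S p) (hindep : IndepValues S p)
    (hg : IsChoice n b g) (h0A : 0 ∉ A) (hA : A.Nonempty)
    (hthr : ∀ t, util S p g (thresh n b t) ≤ c) {r : ℝ} (hr : 0 ≤ r) :
    expectation S p (valueOn b hA (IsBlockedShell S p b A c r)) ≤ 4 * r * c := by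
  have hc := (util_nonneg hdist _).trans (hthr 0)
  set F : Profile n → ℝ := fun v =>
    if IsBlockedShell S p b A c r (topUtility b hA v) (topValue b hA v) then topValue b hA v else 0
  have hF : DependsOn F A := fun v w h => by
    simp only [F, dependsOn_topUtility h, dependsOn_topValue h]
  have hsplit : valueOn b hA (IsBlockedShell S p b A c r) =
      fun v => F v * if v 0 + b 0 ≤ topUtility b hA v then 1 else 0 := by
    funext v
    simp only [valueOn, F, ite_zero_mul_ite_zero, mul_one]
  have hindep' := expectation_mul_eq hdist hindep A hF (κ := topUtility b hA) dependsOn_topUtility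
    (G := fun s v => if v 0 + b 0 ≤ s then 1 else 0)
    fun s => dependsOn_indicator fun v w h => by rw [h 0 (by simpa using h0A)]
  rw [hsplit, hindep', ← expectation_const hdist.2.1 (4 * r * c)]
  refine expectation_mono hdist.1 fun v hv _ => ?_
  simp only [F]
  split_ifs with h
  · obtain ⟨hbp, w, hw, hmw, hblock⟩ := h
    have hout := mul_prob_outside_le hdist hindep hg hthr hbp hw hblock
    have hO := prob_nonneg hdist.1 fun v' => v' 0 + b 0 ≤ topUtility b hA v
    have hM := topValue_nonneg (b := b) (hA := hA) (hdist.2.2 v hv)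
    change topValue b hA v * prob S p (fun v' => v' 0 + b 0 ≤ topUtility b hA v) ≤ 4 * r * c
    nlinarith [mul_le_mul_of_nonneg_right hmw.le hO]
  · simp only [zero_mul]
    positivity

lemma valueOn_true_le_sum (hc : 0 ≤ c) {r : ℝ} (hr : 1 ≤ r) (hA : A.Nonempty) {v : Profile n}
    (hv : ∀ i, 0 ≤ v i) {k : ℕ} (hk : topValue b hA v < 4 * c * r ^ k) :
    valueOn b hA (fun _ _ => True) v ≤
      valueOn b hA (IsLow b A c) v + valueOn b hA (IsHigh b A c) v +
        ∑ j ∈ range k, valueOn b hA (IsClearShell S p b A c (4 * c * r ^ j)) v +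
          valueOn b hA (IsBlockedShell S p b A c r) v := by
  have hnn := fun R => valueOn_nonneg (b := b) (hA := hA) R hv
  have hsum := sum_nonneg fun j (_ : j ∈ range k) =>
    hnn (IsClearShell S p b A c (4 * c * r ^ j))
  by_cases h0 : v 0 + b 0 ≤ topUtility b hA v
  swap
  · have : valueOn b hA (fun _ _ => True) v = 0 := if_neg fun h => h0 h.2
    linarith [hnn (IsLow b A c), hnn (IsHigh b A c), hnn (IsBlockedShell S p b A c r)]
  rw [valueOn_of trivial h0]
  by_cases hlow : IsLow b A c (topUtility b hA v) (topValue b hA v)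
  · rw [valueOn_of hlow h0]
    linarith [hnn (IsHigh b A c), hnn (IsBlockedShell S p b A c r)]
  by_cases hhigh : IsHigh b A c (topUtility b hA v) (topValue b hA v)
  · rw [valueOn_of hhigh h0]
    linarith [hnn (IsLow b A c), hnn (IsBlockedShell S p b A c r)]
  simp only [IsLow, IsHigh, not_lt] at hlow hhigh
  have hbp := maxBias_le_topUtility hv h0
  obtain ⟨j, hj, hjM, hMj⟩ := exists_le_lt_succ (fun j => 4 * c * r ^ j)
    (x := topValue b hA v) (by simp only [pow_zero, mul_one]; linarith) hk
  by_cases hclear : prob S p (Blocked b A (maxBias b A + 2 * c - 4 * c * r ^ j)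
      (topUtility b hA v)) ≤ 1 / 2
  · have := single_le_sum (fun j _ => hnn (IsClearShell S p b A c (4 * c * r ^ j)))
      (mem_range.2 hj)
    rw [valueOn_of ⟨hhigh, hjM, hclear⟩ h0] at this
    linarith [hnn (IsLow b A c), hnn (IsHigh b A c), hnn (IsBlockedShell S p b A c r)]
  · have hw : 4 * c ≤ 4 * c * r ^ j := le_mul_of_one_le_right (by positivity) (one_le_pow₀ hr)
    have hMj' : topValue b hA v < r * (4 * c * r ^ j) := by
      simpa only [pow_succ, mul_comm r, mul_assoc] using hMj
    rw [valueOn_of (R := IsBlockedShell S p b A c r) ⟨hbp, _, hw, hMj', not_le.1 hclear⟩ h0]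
    linarith [hnn (IsLow b A c), hnn (IsHigh b A c)]

end ThresholdBound

theorem util_le_of_values_lt {S : Finset (Profile n)} {p : Profile n → ℝ}
    {b : Fin (n + 1) → ℝ} {g : Finset (Fin (n + 1)) → Profile n → Fin (n + 1)}
    {A : Finset (Fin (n + 1))} {c r : ℝ} (hdist : ValidDist S p) (hindep : IndepValues S p)
    (hg : IsChoice n b g) (h0A : 0 ∉ A) (hthr : ∀ t, util S p g (thresh n b t) ≤ c)
    (hr : 1 ≤ r) (k : ℕ) (hval : ∀ v ∈ S, 0 < p v → ∀ i ∈ A, v i < 4 * c * r ^ k) :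
    util S p g A ≤ (8 + 2 * k + 4 * r) * c := by
  have hc := (util_nonneg hdist _).trans (hthr 0)
  rcases A.eq_empty_or_nonempty with rfl | hA
  · have : 0 ≤ (7 + 2 * k + 4 * r) * c := by positivity
    linarith [util_empty_le (g := g) hthr]
  calc util S p g A
      ≤ util S p g ∅ + expectation S p (valueOn b hA fun _ _ => True) :=
        util_le_util_empty_add hdist hg hA
    _ ≤ c + (expectation S p (valueOn b hA (IsLow b A c)) +
          expectation S p (valueOn b hA (IsHigh b A c)) +
          ∑ j ∈ range k, expectation S p (valueOn b hA (IsClearShell S p b A c (4 * c * r ^ j))) +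
          expectation S p (valueOn b hA (IsBlockedShell S p b A c r))) := by
        gcongr
        · exact util_empty_le hthr
        simp only [← expectation_sum, ← expectation_add]
        refine expectation_mono hdist.1 fun v hv hpv => valueOn_true_le_sum hc hr hA
          (hdist.2.2 v hv) ?_
        obtain ⟨j, hj, -, hjM⟩ := exists_topValue_eq (b := b) (hA := hA) v
        exact hjM ▸ hval v hv hpv j hj
    _ ≤ c + (5 * c + 2 * c + ∑ _j ∈ range k, 2 * c + 4 * r * c) := by
        gcongr
        · exact expectation_valueOn_low_le hdist hg h0A hA hthr
        · exact expectation_valueOn_high_le hdist hindep hg h0A hA hthr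
        · exact expectation_valueOn_clearShell_le hdist hindep hg h0A hA hthr _
        · exact expectation_valueOn_blockedShell_le hdist hindep hg h0A hA hthr (by linarith)
    _ = (8 + 2 * k + 4 * r) * c := by
        rw [sum_const, card_range, nsmul_eq_mul]
        ring

end Delegation

end

theorem parametrized_threshold_approximation_general {n : ℕ} (b : Fin (n + 1) → ℝ)
    (S : Finset (Profile n)) (p : Profile n → ℝ)
    (hdist : ValidDist S p) (hindep : IndepValues S p)
    (g : Finset (Fin (n + 1)) → Profile n → Fin (n + 1)) (hg : IsChoice n b g)
    (Astar : Finset (Fin (n + 1))) (hopt : OptimalMenu S p g Astar)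
    (α : ℕ) (hα : 4 ≤ α)
    (hbad : ∀ t : ℝ, 16 * (α : ℝ) * util S p g (thresh n b t) < util S p g Astar) :
    ∃ i : Fin (n + 1), i ≠ 0 ∧ ∃ v ∈ S, 0 < p v ∧
      ((α : ℝ) - 2) ^ (α - 1) / (8 * (α : ℝ)) * util S p g Astar ≤ v i := by
  by_contra! hsmall
  have hα' : (4 : ℝ) ≤ α := by exact_mod_cast hα
  set c := util S p g Astar / (16 * α)
  have hOPT : util S p g Astar = 16 * α * c := by
    simp only [c]
    field_simp
  have hc : 0 < c := by
    have := (mul_nonneg (by positivity) (Delegation.util_nonneg hdist _)).trans_lt (hbad 0)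
    nlinarith
  have hthr : ∀ t, util S p g (thresh n b t) ≤ c := fun t => by
    nlinarith [hbad t]
  have hval : ∀ v ∈ S, 0 < p v → ∀ i ∈ Astar, v i < 4 * c * ((α : ℝ) - 2) ^ (α - 1) := by
    intro v hv hpv i hi
    have hbound : ((α : ℝ) - 2) ^ (α - 1) / (8 * α) * util S p g Astar =
        2 * c * ((α : ℝ) - 2) ^ (α - 1) := by
      rw [hOPT]
      field_simp
      ring
    have := hsmall i (ne_of_mem_of_not_mem hi hopt.1) v hv hpv
    nlinarith [pow_nonneg (show (0 : ℝ) ≤ α - 2 by linarith) (α - 1)]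
  have := Delegation.util_le_of_values_lt hdist hindep hg hopt.1 hthr (by linarith) (α - 1) hval
  rw [Nat.cast_sub (by omega), hOPT] at this
  nlinarith

/-- **parametrized analysis.** With mutually independent values
(the outside option may be randomized), if every action of the optimal menu `A*`
is selected with positive probability and, for some integer `α ≥ 4`, every
threshold menu satisfies `f(A*) > 16·α·f(A_t)`, then some action's value is,
with positive probability, at least `((α−2)^(α−1) / (8α)) · f(A*)`. -/
theorem parametrized_threshold_approximation {n : ℕ} (b : Fin (n + 1) → ℝ)
    (S : Finset (Profile n)) (p : Profile n → ℝ)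
    (hdist : ValidDist S p) (hindep : IndepValues S p)
    (g : Finset (Fin (n + 1)) → Profile n → Fin (n + 1)) (hg : IsChoice n b g)
    (Astar : Finset (Fin (n + 1))) (hopt : OptimalMenu S p g Astar)
    (hsel : ∀ i ∈ Astar, 0 < ∑ v ∈ S.filter fun v => g Astar v = i, p v)
    (α : ℕ) (hα : 4 ≤ α)
    (hbad : ∀ t : ℝ, 16 * (α : ℝ) * util S p g (thresh n b t) < util S p g Astar) :
    ∃ i : Fin (n + 1), i ≠ 0 ∧ ∃ v ∈ S, 0 < p v ∧
      ((α : ℝ) - 2) ^ (α - 1) / (8 * (α : ℝ)) * util S p g Astar ≤ v i :=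
  parametrized_threshold_approximation_general b S p hdist hindep g hg Astar hopt α hα hbad
end

section
/- The 4·log(p_min^{−1}) analysis of threshold policies is tight up to a constant factor: for every integer k ≥ 2 and every δ > 0, there exists a delegation instance with 2k−1 actions (no outside option) whose value profile is uniformly distributed over 2^k − 1 correlated realizations (so p_min = 1/(2^k − 1)), in which f(A*) ≥ (k/(2+δ)) · f(A_t) for every threshold t ∈ ℝ; hence no threshold policy is better than an Ω(log p_min^{−1})-approximation on this family. -/
open Finset

/-!
The instance has `k` main actions `i < k` with bias `-2^(i+1) M` and `k - 1` decoys `j < k - 1`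
with bias `-(2^(j+1) M + 1)`. In a profile of type `i` only main action `i` and the decoys `j < i`
have positive value, namely minus their bias plus the agent utility they yield: `r / 2^k < 1/2` for
the main action and `1/2 + 1/(j+2)` for decoy `j`; all other actions give the agent negative
utility. Type `i` occurs `2^(k-1-i)` times (the index `r` only makes the profiles distinct), so the
menu of all main actions, which is pointwise optimal, earns about `2^k M` per type, `k 2^k M` in
total.

A threshold menu whose least main action is `m` contains every decoy `j ≥ m`. For types `i > m`
the agent prefers decoy `m` (worth about `2^(m+1) M`) to main action `i` and to the later decoys,
and for types `i < m` nothing of positive value is available. So a threshold menu earns at most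
`2^(k-m) (2^(m+1) M + 2) ≤ 2^(k+1) (M + 1)`, and `M = 1 + 2/δ` gives the ratio `k / (2 + δ)`.
-/

theorem sum_fin_ite_two_pow (m k : ℕ) :
    ∑ i : Fin k, (if m ≤ (i : ℕ) then 2 ^ (k - 1 - i) else 0) = 2 ^ (k - m) - 1 := by
  induction k with
  | zero => simp
  | succ k ih =>
    have hdouble : ∀ i : Fin k, (if m ≤ (i : ℕ) then 2 ^ (k - i) else 0)
        = 2 * (if m ≤ (i : ℕ) then 2 ^ (k - 1 - i) else 0) := by
      intro i
      split_ifs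
      · rw [← pow_succ', show k - 1 - i + 1 = k - i by omega]
      · rfl
    rw [Fin.sum_univ_castSucc]
    simp only [Fin.val_castSucc, Fin.val_last, add_tsub_cancel_right]
    rw [sum_congr rfl fun i _ => hdouble i, ← mul_sum, ih]
    split_ifs with hm
    · have : 1 ≤ 2 ^ (k - m) := Nat.one_le_two_pow
      rw [Nat.sub_self, show k + 1 - m = k - m + 1 by omega, pow_succ]
      omega
    · simp [show k - m = 0 by omega, show k + 1 - m = 0 by omega]

namespace IsChoiceN

variable {n : ℕ} {b : Fin n → ℝ} {g : Finset (Fin n) → (Fin n → ℝ) → Fin n}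
  {A : Finset (Fin n)}

theorem choice_mem (hg : IsChoiceN n b g) (v : Fin n → ℝ) (hA : A.Nonempty) : g A v ∈ A :=
  (hg A v hA).1

theorem utility_le_choice (hg : IsChoiceN n b g) (v : Fin n → ℝ) (hA : A.Nonempty) {j : Fin n}
    (hj : j ∈ A) : v j + b j ≤ v (g A v) + b (g A v) :=
  (hg A v hA).2.1 j hj

end IsChoiceN

theorem utilN_image_const {n : ℕ} {ι : Type*} [Fintype ι] {φ : ι → Fin n → ℝ}
    (hφ : Function.Injective φ) (c : ℝ) (g : Finset (Fin n) → (Fin n → ℝ) → Fin n)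
    (A : Finset (Fin n)) :
    utilN (univ.image φ) (fun _ => c) g A = c * ∑ s, φ s (g A (φ s)) := by
  rw [utilN, sum_image fun x _ y _ h => hφ h, mul_sum]

namespace TightInstance

noncomputable section

variable (k : ℕ)

abbrev Action : Type := Fin k ⊕ Fin (k - 1)

def actionEquiv : Action k ≃ Fin (2 * k - 1) :=
  finSumFinEquiv.trans (finCongr (by omega))

/-- Value profile `⟨i, r⟩` is the `r`-th copy of the profiles of type `i`. -/
abbrev Idx : Type := Σ i : Fin k, Fin (2 ^ (k - 1 - i))

theorem card_idx : Fintype.card (Idx k) = 2 ^ k - 1 := by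
  simpa using sum_fin_ite_two_pow 0 k

variable {k} (M : ℝ)

def weight : Action k → ℝ
  | .inl i => 2 ^ ((i : ℕ) + 1) * M
  | .inr j => 2 ^ ((j : ℕ) + 1) * M + 1

/-- Weights increase along main `0`, decoy `0`, main `1`, decoy `1`, …; `rank x` is the index of
the lightest main action at least as heavy as `x`. -/
def rank : Action k → ℕ
  | .inl i => i
  | .inr j => j + 1

def decoyGain (j : ℕ) : ℝ := 1 / 2 + 1 / (j + 2)

def value (s : Idx k) : Action k → ℝ
  | .inl i => if i = s.1 then 2 ^ ((i : ℕ) + 1) * M + s.2 / 2 ^ k else 0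
  | .inr j => if (j : ℕ) < s.1 then 2 ^ ((j : ℕ) + 1) * M + 1 + decoyGain j else 0

def gain (s : Idx k) (x : Action k) : ℝ := value M s x - weight M x

def bias (a : Fin (2 * k - 1)) : ℝ := -weight M ((actionEquiv k).symm a)

def profile (s : Idx k) (a : Fin (2 * k - 1)) : ℝ := value M s ((actionEquiv k).symm a)

variable (k) in
def support : Finset (Fin (2 * k - 1) → ℝ) := univ.image (profile M)

variable (k) in
def mainMenu : Finset (Fin (2 * k - 1)) := univ.image fun i => actionEquiv k (.inl i)

def totalValue (g : Finset (Fin (2 * k - 1)) → (Fin (2 * k - 1) → ℝ) → Fin (2 * k - 1))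
    (A : Finset (Fin (2 * k - 1))) : ℝ :=
  ∑ s : Idx k, profile M s (g A (profile M s))

theorem half_lt_decoyGain (j : ℕ) : 1 / 2 < decoyGain j := by
  unfold decoyGain; linarith [show (0 : ℝ) < 1 / (j + 2) by positivity]

theorem decoyGain_le_one (j : ℕ) : decoyGain j ≤ 1 := by
  unfold decoyGain
  linarith [one_div_le_one_div_of_le (by norm_num) (by linarith [j.cast_nonneg (α := ℝ)] :
    (2 : ℝ) ≤ j + 2)]

theorem decoyGain_strictAnti : StrictAnti decoyGain := by
  intro i j hij
  unfold decoyGain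
  gcongr

theorem frac_lt_half (s : Idx k) : (s.2 : ℝ) / 2 ^ k < 1 / 2 := by
  have hk : (2 : ℝ) ^ k = 2 * 2 ^ (k - 1) := by
    rw [← pow_succ']; congr 1; have := s.1.pos; omega
  have hr : (s.2 : ℝ) < 2 ^ (k - 1) := by
    calc (s.2 : ℝ) < 2 ^ (k - 1 - s.1 : ℕ) := by exact_mod_cast s.2.isLt
      _ ≤ 2 ^ (k - 1) := pow_le_pow_right₀ one_le_two (by omega)
  rw [hk, div_lt_iff₀ (by positivity)]
  linarith

theorem weight_pos (hM : 0 < M) (x : Action k) : 0 < weight M x := by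
  cases x <;> simp only [weight] <;> positivity

theorem value_nonneg (hM : 0 ≤ M) (s : Idx k) (x : Action k) : 0 ≤ value M s x := by
  cases x <;> simp only [value, decoyGain] <;> split_ifs <;> positivity

theorem rank_lt : ∀ x : Action k, rank x < k
  | .inl i => i.2
  | .inr j => by have := j.2; simp only [rank]; omega

theorem weight_le_two_pow_rank (hM : 1 ≤ M) :
    ∀ x : Action k, weight M x ≤ 2 ^ (rank x + 1) * M
  | .inl i => le_rfl
  | .inr j => by
    have : 1 ≤ 2 ^ ((j : ℕ) + 1) * M :=
      one_le_mul_of_one_le_of_one_le (one_le_pow₀ one_le_two) hM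
    simp only [weight, rank, pow_succ _ ((j : ℕ) + 1)]
    linarith

theorem value_eq_zero_of_lt_rank {s : Idx k} :
    ∀ {x : Action k}, (s.1 : ℕ) < rank x → value M s x = 0
  | .inl i, h => if_neg fun hi => by simp [rank, hi] at h
  | .inr j, h => if_neg (by simp only [rank] at h; omega)

@[simp]
theorem value_inl_self (s : Idx k) :
    value M s (.inl s.1) = 2 ^ ((s.1 : ℕ) + 1) * M + s.2 / 2 ^ k :=
  if_pos rfl

theorem gain_inl_self (s : Idx k) : gain M s (.inl s.1) = s.2 / 2 ^ k := by
  simp [gain, weight]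

theorem gain_inr_of_lt {s : Idx k} {j : Fin (k - 1)} (h : (j : ℕ) < s.1) :
    gain M s (.inr j) = decoyGain j := by
  simp [gain, value, weight, h]

theorem value_le_value_inl_self (hM : 1 ≤ M) (s : Idx k) :
    ∀ x, value M s x ≤ value M s (.inl s.1)
  | .inl i => by
    by_cases hi : i = s.1
    · rw [hi]
    · rw [value, if_neg hi, value_inl_self]; positivity
  | .inr j => by
    rw [value_inl_self, value]
    split_ifs with hj
    · have hpow : (2 : ℝ) ^ ((j : ℕ) + 1) ≤ 2 ^ (s.1 : ℕ) := pow_le_pow_right₀ one_le_two hj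
      have htwo : 2 ≤ (2 : ℝ) ^ (s.1 : ℕ) * M := by
        calc (2 : ℝ) = 2 ^ 1 * 1 := by norm_num
          _ ≤ 2 ^ (s.1 : ℕ) * M := by gcongr; norm_num; omega
      have : (2 : ℝ) ^ ((j : ℕ) + 1) * M ≤ 2 ^ (s.1 : ℕ) * M :=
        mul_le_mul_of_nonneg_right hpow (by linarith)
      have : 0 ≤ (s.2 : ℝ) / 2 ^ k := by positivity
      have : (2 : ℝ) ^ ((s.1 : ℕ) + 1) * M = 2 * (2 ^ (s.1 : ℕ) * M) := by ring
      linarith [decoyGain_le_one j]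
    · positivity

@[simp]
theorem profile_apply (s : Idx k) (x : Action k) :
    profile M s (actionEquiv k x) = value M s x := by
  simp [profile]

@[simp]
theorem bias_apply (x : Action k) : bias M (actionEquiv k x) = -weight M x := by
  simp [bias]

variable {M} {g : Finset (Fin (2 * k - 1)) → (Fin (2 * k - 1) → ℝ) → Fin (2 * k - 1)}
  {A : Finset (Fin (2 * k - 1))}

theorem exists_choice (hg : IsChoiceN (2 * k - 1) (bias M) g) (hA : A.Nonempty) (s : Idx k) :
    ∃ c : Action k, actionEquiv k c ∈ A ∧ profile M s (g A (profile M s)) = value M s c ∧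
      ∀ x, actionEquiv k x ∈ A → gain M s x ≤ gain M s c := by
  obtain ⟨c, hc⟩ := (actionEquiv k).surjective (g A (profile M s))
  refine ⟨c, hc ▸ hg.choice_mem _ hA, by rw [← hc, profile_apply], fun x hx => ?_⟩
  have := hg.utility_le_choice (profile M s) hA hx
  rw [← hc, profile_apply, profile_apply, bias_apply, bias_apply] at this
  unfold gain; linarith

theorem mainMenu_nonempty (hk : 1 ≤ k) : (mainMenu k).Nonempty :=
  ⟨_, mem_image_of_mem _ (mem_univ (⟨0, hk⟩ : Fin k))⟩

theorem value_choice_mainMenu (hM : 0 < M) (hg : IsChoiceN (2 * k - 1) (bias M) g) (s : Idx k) :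
    profile M s (g (mainMenu k) (profile M s)) = value M s (.inl s.1) := by
  have hmem : ∀ i, actionEquiv k (.inl i) ∈ mainMenu k := fun i => mem_image_of_mem _ (mem_univ i)
  obtain ⟨c, hcA, hval, hmax⟩ := exists_choice hg ⟨_, hmem s.1⟩ s
  obtain ⟨i, -, hi⟩ := mem_image.1 hcA
  obtain rfl : Sum.inl i = c := (actionEquiv k).injective hi
  obtain rfl : i = s.1 := by
    by_contra hne
    have hbeat := hmax _ (hmem s.1)
    rw [gain_inl_self] at hbeat
    have : gain M s (.inl i) < 0 := by
      simp only [gain, value, if_neg hne, zero_sub, neg_neg_iff_pos]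
      exact weight_pos M hM _
    have : 0 ≤ (s.2 : ℝ) / 2 ^ k := by positivity
    linarith
  exact hval

theorem value_choice_le_of_decoy_mem (hM : 0 < M) (hg : IsChoiceN (2 * k - 1) (bias M) g)
    {s : Idx k} {j₀ : Fin (k - 1)} (hj₀ : (j₀ : ℕ) < s.1) (hmem : actionEquiv k (.inr j₀) ∈ A) :
    profile M s (g A (profile M s)) ≤ 2 ^ ((j₀ : ℕ) + 1) * M + 2 := by
  obtain ⟨c, -, hval, hmax⟩ := exists_choice hg ⟨_, hmem⟩ s
  have hbeat := hmax _ hmem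
  rw [gain_inr_of_lt M hj₀] at hbeat
  have := half_lt_decoyGain j₀
  rw [hval]
  rcases c with i | j
  · by_cases hi : i = s.1
    · subst hi
      rw [gain_inl_self] at hbeat
      linarith [frac_lt_half s]
    · rw [value, if_neg hi]; positivity
  · by_cases hj : (j : ℕ) < s.1
    · rw [gain_inr_of_lt M hj] at hbeat
      have hjj₀ : (j : ℕ) ≤ j₀ := decoyGain_strictAnti.le_iff_ge.1 hbeat
      have : (2 : ℝ) ^ ((j : ℕ) + 1) * M ≤ 2 ^ ((j₀ : ℕ) + 1) * M := by gcongr; norm_num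
      rw [value, if_pos hj]
      linarith [decoyGain_le_one j]
    · rw [value, if_neg hj]; positivity

theorem mem_threshN_iff {t : ℝ} {x : Action k} :
    actionEquiv k x ∈ threshN (2 * k - 1) (bias M) t ↔ -t ≤ weight M x := by
  simp only [threshN, mem_filter, mem_univ, true_and, bias_apply]
  constructor <;> intro h <;> linarith

/-- `m` is the least index of a main action in the threshold menu. -/
theorem exists_level (hM : 1 ≤ M) {t : ℝ} (hne : (threshN (2 * k - 1) (bias M) t).Nonempty) :
    ∃ m < k, -t ≤ 2 ^ (m + 1) * M ∧ ∀ i < m, 2 ^ (i + 1) * M < -t := by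
  classical
  obtain ⟨a, ha⟩ := hne
  obtain ⟨x, rfl⟩ := (actionEquiv k).surjective a
  have hrank : -t ≤ 2 ^ (rank x + 1) * M :=
    (mem_threshN_iff.1 ha).trans (weight_le_two_pow_rank M hM x)
  have hex : ∃ i, -t ≤ 2 ^ (i + 1) * M := ⟨rank x, hrank⟩
  exact ⟨Nat.find hex, (Nat.find_le hrank).trans_lt (rank_lt x), Nat.find_spec hex,
    fun i hi => not_le.1 (Nat.find_min hex hi)⟩

theorem value_choice_threshN_le (hM : 1 ≤ M) (hg : IsChoiceN (2 * k - 1) (bias M) g) {t : ℝ}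
    (hne : (threshN (2 * k - 1) (bias M) t).Nonempty) {m : ℕ} (hm : -t ≤ 2 ^ (m + 1) * M)
    (hmin : ∀ i < m, 2 ^ (i + 1) * M < -t) (s : Idx k) :
    profile M s (g (threshN (2 * k - 1) (bias M) t) (profile M s))
      ≤ if m ≤ s.1 then 2 ^ (m + 1) * M + 2 else 0 := by
  obtain ⟨c, hcA, hval, -⟩ := exists_choice hg hne s
  split_ifs with hms
  · rcases hms.lt_or_eq with hlt | rfl
    · have hmk : m < k - 1 := by omega
      refine value_choice_le_of_decoy_mem (by linarith) hg (j₀ := ⟨m, hmk⟩) hlt ?_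
      rw [mem_threshN_iff, weight]
      linarith
    · rw [hval]
      refine (value_le_value_inl_self M hM s c).trans ?_
      rw [value_inl_self]
      linarith [frac_lt_half s]
  · have hrank : m ≤ rank c := by
      by_contra! hlt
      linarith [hmin _ hlt, mem_threshN_iff.1 hcA, weight_le_two_pow_rank M hM c]
    rw [hval, value_eq_zero_of_lt_rank M (by omega)]

theorem sum_idx (F : Fin k → ℝ) :
    ∑ s : Idx k, F s.1 = ∑ i : Fin k, (2 : ℝ) ^ (k - 1 - (i : ℕ)) * F i := by
  simp [Fintype.sum_sigma, nsmul_eq_mul]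

theorem totalValue_le_mainMenu (hM : 1 ≤ M) (hg : IsChoiceN (2 * k - 1) (bias M) g)
    (hA : A.Nonempty) : totalValue M g A ≤ totalValue M g (mainMenu k) := by
  refine sum_le_sum fun s _ => ?_
  obtain ⟨c, -, hval, -⟩ := exists_choice hg hA s
  rw [hval, value_choice_mainMenu (by linarith) hg]
  exact value_le_value_inl_self M hM s c

theorem le_totalValue_mainMenu (hM : 0 < M) (hg : IsChoiceN (2 * k - 1) (bias M) g) :
    k * 2 ^ k * M ≤ totalValue M g (mainMenu k) := by
  have hpow : ∀ i : Fin k, (2 : ℝ) ^ (k - 1 - i) * (2 ^ ((i : ℕ) + 1) * M) = 2 ^ k * M := by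
    intro i
    rw [← mul_assoc, ← pow_add, show k - 1 - i + (i + 1) = k by omega]
  calc (k : ℝ) * 2 ^ k * M
        = ∑ i : Fin k, (2 : ℝ) ^ (k - 1 - (i : ℕ)) * (2 ^ ((i : ℕ) + 1) * M) := by
          simp [hpow, mul_assoc]
    _ = ∑ s : Idx k, 2 ^ ((s.1 : ℕ) + 1) * M := (sum_idx fun i => 2 ^ ((i : ℕ) + 1) * M).symm
    _ ≤ totalValue M g (mainMenu k) := by
        refine sum_le_sum fun s _ => ?_
        rw [value_choice_mainMenu hM hg, value_inl_self]
        have : 0 ≤ (s.2 : ℝ) / 2 ^ k := by positivity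
        linarith

theorem totalValue_threshN_le (hM : 1 ≤ M) (hg : IsChoiceN (2 * k - 1) (bias M) g) {t : ℝ}
    (hne : (threshN (2 * k - 1) (bias M) t).Nonempty) :
    totalValue M g (threshN (2 * k - 1) (bias M) t) ≤ 2 ^ (k + 1) * (M + 1) := by
  obtain ⟨m, hmk, hm, hmin⟩ := exists_level hM hne
  set C : ℝ := 2 ^ (m + 1) * M + 2
  have hcount : ∑ i : Fin k, (2 : ℝ) ^ (k - 1 - (i : ℕ)) * (if m ≤ (i : ℕ) then C else 0)
      = (2 ^ (k - m) - 1) * C := by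
    have := congrArg (Nat.cast : ℕ → ℝ) (sum_fin_ite_two_pow m k)
    push_cast [Nat.cast_sub Nat.one_le_two_pow] at this
    rw [← this, sum_mul]
    refine sum_congr rfl fun i _ => ?_
    split_ifs <;> simp
  have hsplit : (2 : ℝ) ^ (k - m) * 2 ^ (m + 1) = 2 ^ (k + 1) := by
    rw [← pow_add, show k - m + (m + 1) = k + 1 by omega]
  have hle : (2 : ℝ) ^ (k - m) ≤ 2 ^ k := pow_le_pow_right₀ one_le_two (by omega)
  calc totalValue M g (threshN (2 * k - 1) (bias M) t)
      ≤ ∑ s : Idx k, if m ≤ (s.1 : ℕ) then C else 0 :=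
        sum_le_sum fun s _ => value_choice_threshN_le hM hg hne hm hmin s
    _ = (2 ^ (k - m) - 1) * C := by
        rw [sum_idx fun i => if m ≤ (i : ℕ) then C else 0, hcount]
    _ ≤ 2 ^ (k + 1) * (M + 1) := by
        have : 0 ≤ (2 : ℝ) ^ (m + 1) * M := by positivity
        nlinarith [pow_succ (2 : ℝ) k]

theorem profile_injective (hM : 0 < M) : Function.Injective (profile (k := k) M) := by
  rintro ⟨i, r⟩ ⟨i', r'⟩ h
  have h' := congrFun h (actionEquiv k (.inl i))
  simp only [profile_apply] at h'
  by_cases hi : i = i'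
  · subst hi
    simp only [value, if_true, add_right_inj] at h'
    rw [div_left_inj' (by positivity), Nat.cast_inj, Fin.val_inj] at h'
    rw [h']
  · rw [value, value, if_pos rfl, if_neg hi] at h'
    have : 0 < 2 ^ ((i : ℕ) + 1) * M + (r : ℝ) / 2 ^ k := by positivity
    exact absurd h' this.ne'

theorem card_support (hM : 0 < M) : (support k M).card = 2 ^ k - 1 := by
  rw [support, card_image_of_injective _ (profile_injective hM), card_univ, card_idx]

theorem validDistN_support (hk : 1 ≤ k) (hM : 0 < M) :
    ValidDistN (support k M) fun _ => 1 / ((2 : ℝ) ^ k - 1) := by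
  have hpow : (1 : ℝ) < 2 ^ k := one_lt_pow₀ one_lt_two (by omega)
  refine ⟨fun _ _ => by rw [one_div_nonneg]; linarith, ?_, ?_⟩
  · rw [sum_const, card_support hM, nsmul_eq_mul, Nat.cast_sub Nat.one_le_two_pow]
    push_cast
    field_simp [show (2 : ℝ) ^ k - 1 ≠ 0 by linarith]
  · intro v hv a
    obtain ⟨s, -, rfl⟩ := mem_image.1 hv
    exact value_nonneg M hM.le s _

theorem utilN_support (hM : 0 < M) (c : ℝ) (A : Finset (Fin (2 * k - 1))) :
    utilN (support k M) (fun _ => c) g A = c * totalValue M g A :=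
  utilN_image_const (profile_injective hM) c g A

end

end TightInstance

open TightInstance in
/-- **tightness of the logarithmic approximation.** For every
integer `k ≥ 2` and `δ > 0` there is a delegation instance with `2k−1` actions
whose value profile is uniform over `2^k − 1` correlated realizations (so
`p_min = 1/(2^k − 1)`) in which `f(A*) ≥ (k/(2+δ)) · f(A_t)` for every (nonempty)
threshold menu; hence no threshold policy beats an `Ω(log p_min⁻¹)`-approximation
on this family. -/
theorem log_approximation_tight (k : ℕ) (hk : 2 ≤ k) (δ : ℝ) (hδ : 0 < δ) :
    ∃ (b : Fin (2 * k - 1) → ℝ) (S : Finset (Fin (2 * k - 1) → ℝ))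
      (p : (Fin (2 * k - 1) → ℝ) → ℝ),
      ValidDistN S p ∧ S.card = 2 ^ k - 1 ∧
      (∀ v ∈ S, p v = 1 / ((2 : ℝ) ^ k - 1)) ∧
      ∀ g : Finset (Fin (2 * k - 1)) → (Fin (2 * k - 1) → ℝ) → Fin (2 * k - 1),
        IsChoiceN (2 * k - 1) b g →
          ∃ Astar : Finset (Fin (2 * k - 1)), Astar.Nonempty ∧
            (∀ A : Finset (Fin (2 * k - 1)), A.Nonempty →
              utilN S p g A ≤ utilN S p g Astar) ∧
            ∀ t : ℝ, (threshN (2 * k - 1) b t).Nonempty →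
              ((k : ℝ) / (2 + δ)) * utilN S p g (threshN (2 * k - 1) b t)
                ≤ utilN S p g Astar := by
  obtain ⟨M, hM, hδM⟩ : ∃ M : ℝ, 1 ≤ M ∧ 2 ≤ δ * M :=
    ⟨1 + 2 / δ, by linarith [show 0 < 2 / δ by positivity], by
      rw [mul_add, mul_div_cancel₀ _ hδ.ne']; linarith⟩
  have hk1 : 1 ≤ k := by omega
  have hM0 : 0 < M := by linarith
  set c : ℝ := 1 / ((2 : ℝ) ^ k - 1)
  have hc : 0 < c :=
    one_div_pos.2 (by linarith [one_lt_pow₀ (one_lt_two (α := ℝ)) (by omega : k ≠ 0)])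
  refine ⟨bias M, support k M, fun _ => c, validDistN_support hk1 hM0, card_support hM0,
    fun _ _ => rfl, fun g hg => ⟨mainMenu k, mainMenu_nonempty hk1, fun A hA => ?_, fun t ht => ?_⟩⟩
  · rw [utilN_support hM0, utilN_support hM0]
    exact mul_le_mul_of_nonneg_left (totalValue_le_mainMenu hM hg hA) hc.le
  · rw [utilN_support hM0, utilN_support hM0]
    calc (k : ℝ) / (2 + δ) * (c * totalValue M g (threshN (2 * k - 1) (bias M) t))
        ≤ k / (2 + δ) * (c * (2 ^ (k + 1) * (M + 1))) := by
          gcongr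
          exact totalValue_threshN_le hM hg ht
      _ ≤ c * (k * 2 ^ k * M) := by
          rw [div_mul_eq_mul_div, div_le_iff₀ (by positivity)]
          calc (k : ℝ) * (c * (2 ^ (k + 1) * (M + 1))) = c * k * 2 ^ k * (2 * M + 2) := by ring
            _ ≤ c * k * 2 ^ k * (2 * M + δ * M) := by gcongr
            _ = c * (k * 2 ^ k * M) * (2 + δ) := by ring
      _ ≤ c * totalValue M g (mainMenu k) := by
          gcongr
          exact le_totalValue_mainMenu hM0 hg
end

section
/- No delegation set approximates the first-best to a factor better than n: for every n ≥ 1 and every ε ∈ (0,1), consider the instance with n actions whose values are mutually independent, v_i equal to 1−ε with probability 1/n and 0 otherwise, and biases b_i = i, with no outside option. Then every nonempty menu A ⊆ {1,…,n} satisfies f(A) = (1−ε)/n, while the first-best utility satisfies E[max_i v_i] = (1−ε)·(1 − (1 − 1/n)^n); hence E[max_i v_i]/f(A) = n·(1 − (1 − 1/n)^n) ≥ n·(1 − 1/e). -/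
open Finset

/-
The biases are spaced one apart while every value is below `1`, so the agent always takes
the highest-indexed action of the menu, whose value is `1 - ε` with probability `1/n`.
The first-best instead gets `1 - ε` unless all `n` independent values vanish, which has
probability `(1 - 1/n)^n ≤ 1/e`.
-/

theorem Finset.sum_mul_eq_mul_sum_filter_of_forall_eq_or_eq_zero {α : Type*} (S : Finset α)
    (p h : α → ℝ) (a : ℝ) (hh : ∀ x ∈ S, h x = a ∨ h x = 0) :
    ∑ x ∈ S, p x * h x = a * ∑ x ∈ S.filter fun x => h x = a, p x := by
  rw [sum_filter, mul_sum]
  refine sum_congr rfl fun x hx => ?_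
  split_ifs with hxa
  · rw [hxa, mul_comm]
  · rw [(hh x hx).resolve_left hxa, mul_zero, mul_zero]

theorem Finset.sum_filter_eq_one_sub_sum_filter {α : Type*} {S : Finset α} {p : α → ℝ}
    (hp : ∑ x ∈ S, p x = 1) {P Q : α → Prop} [DecidablePred P] [DecidablePred Q]
    (hPQ : ∀ x ∈ S, P x ↔ ¬ Q x) :
    ∑ x ∈ S.filter P, p x = 1 - ∑ x ∈ S.filter Q, p x := by
  rw [filter_congr hPQ, ← hp, ← sum_filter_add_sum_filter_not S Q p]
  ring

theorem Finset.sup'_univ_eq_or_eq_zero {ι : Type*} [Fintype ι]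
    (hne : (univ : Finset ι).Nonempty) {v : ι → ℝ} {a : ℝ}
    (hv : ∀ i, v i = a ∨ v i = 0) :
    univ.sup' hne v = a ∨ univ.sup' hne v = 0 := by
  obtain ⟨i, -, hi⟩ := exists_mem_eq_sup' hne v
  rw [hi]
  exact hv i

theorem Finset.sup'_univ_eq_iff_ne_zero {ι : Type*} [Fintype ι]
    (hne : (univ : Finset ι).Nonempty) {v : ι → ℝ} {a : ℝ} (ha : 0 < a)
    (hv : ∀ i, v i = a ∨ v i = 0) :
    univ.sup' hne v = a ↔ v ≠ 0 := by
  constructor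
  · rintro hsup rfl
    exact ha.ne' (hsup.symm.trans (sup'_const hne 0))
  · intro hv0
    obtain ⟨i, hi⟩ := Function.ne_iff.mp hv0
    have hle : a ≤ univ.sup' hne v :=
      ((hv i).resolve_right hi).symm.le.trans (le_sup' v (mem_univ i))
    exact (sup'_univ_eq_or_eq_zero hne hv).resolve_right (ha.trans_le hle).ne'

theorem IsChoiceN.eq_max' {n : ℕ} {b : Fin n → ℝ}
    {g : Finset (Fin n) → (Fin n → ℝ) → Fin n} (hg : IsChoiceN n b g)
    (hb : ∀ i j, i < j → b i + 1 ≤ b j)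
    {v : Fin n → ℝ} (hv0 : ∀ i, 0 ≤ v i) (hv1 : ∀ i, v i < 1) {A : Finset (Fin n)}
    (hA : A.Nonempty) : g A v = A.max' hA := by
  obtain ⟨hmem, hbest, -⟩ := hg A v hA
  refine (A.le_max' _ hmem).eq_of_not_lt fun hlt => ?_
  have := hbest _ (A.max'_mem hA)
  linarith [hb _ _ hlt, hv0 (A.max' hA), hv1 (g A v)]

theorem IndepValuesN.sum_filter_eq_zero {n : ℕ} {S : Finset (Fin n → ℝ)}
    {p : (Fin n → ℝ) → ℝ} (hindep : IndepValuesN S p) (hp : ∑ v ∈ S, p v = 1)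
    {a q : ℝ} (ha : a ≠ 0)
    (hsupp : ∀ v ∈ S, ∀ i, v i = a ∨ v i = 0)
    (hmarg : ∀ i, ∑ v ∈ S.filter fun v => v i = a, p v = q) :
    ∑ v ∈ S.filter fun v => v = 0, p v = (1 - q) ^ n := by
  have hmarg0 (i : Fin n) : ∑ v ∈ S.filter fun v => v i = 0, p v = 1 - q := by
    rw [← hmarg i]
    refine sum_filter_eq_one_sub_sum_filter hp fun v hv => ?_
    rcases hsupp v hv i with h | h <;> simp [h, ha, ha.symm]
  simp only [hindep 0, Pi.zero_apply, hmarg0, prod_const, card_univ, Fintype.card_fin]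

/-- **first-best gap of `n`.** Consider `n ≥ 1` actions with
mutually independent values, `v i = 1 − ε` with probability `1/n` and `0`
otherwise, and biases `b i = i` (actions indexed `1, …, n`, i.e. `b i = i + 1`
for `i : Fin n`), with no outside option.  Then every nonempty menu `A` has
`f(A) = (1−ε)/n`, while the first-best `E[max_i v_i]` equals
`(1−ε)·(1 − (1 − 1/n)^n)`; hence the ratio is `n·(1 − (1 − 1/n)^n) ≥ n·(1 − 1/e)`. -/
theorem first_best_gap (n : ℕ) (hn : 0 < n) (ε : ℝ) (hε : 0 < ε) (hε1 : ε < 1)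
    (b : Fin n → ℝ) (hb : ∀ i : Fin n, b i = (i : ℝ) + 1)
    (S : Finset (Fin n → ℝ)) (p : (Fin n → ℝ) → ℝ)
    (hdist : ValidDistN S p) (hindep : IndepValuesN S p)
    (hsupp : ∀ v ∈ S, ∀ i, v i = 1 - ε ∨ v i = 0)
    (hmarg : ∀ i : Fin n, ∑ v ∈ S.filter fun v => v i = 1 - ε, p v = 1 / n)
    (g : Finset (Fin n) → (Fin n → ℝ) → Fin n) (hg : IsChoiceN n b g) :
    (∀ A : Finset (Fin n), A.Nonempty → utilN S p g A = (1 - ε) / n) ∧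
    (∑ v ∈ S, p v * Finset.univ.sup' (Finset.univ_nonempty_iff.mpr ⟨⟨0, hn⟩⟩) v
      = (1 - ε) * (1 - (1 - 1 / (n : ℝ)) ^ n)) ∧
    (∀ A : Finset (Fin n), A.Nonempty →
      (1 - ε) * (1 - (1 - 1 / (n : ℝ)) ^ n)
        = (n : ℝ) * (1 - (1 - 1 / (n : ℝ)) ^ n) * utilN S p g A) ∧
    (n : ℝ) * (1 - 1 / Real.exp 1) ≤ (n : ℝ) * (1 - (1 - 1 / (n : ℝ)) ^ n) := by
  obtain ⟨-, hp, hv0⟩ := hdist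
  have hpos : (0 : ℝ) < 1 - ε := by linarith
  have hgap (i j : Fin n) (hij : i < j) : b i + 1 ≤ b j := by
    have : (i : ℝ) + 1 ≤ j := by exact_mod_cast Fin.lt_def.mp hij
    rw [hb, hb]
    linarith
  have hutil (A : Finset (Fin n)) (hA : A.Nonempty) : utilN S p g A = (1 - ε) / n := by
    have hchoice (v) (hv : v ∈ S) : p v * v (g A v) = p v * v (A.max' hA) := by
      rw [hg.eq_max' hgap (hv0 v hv) (fun i => by rcases hsupp v hv i with h | h <;> linarith) hA]
    rw [utilN, sum_congr rfl hchoice,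
      sum_mul_eq_mul_sum_filter_of_forall_eq_or_eq_zero _ _ _ _ fun v hv => hsupp v hv _,
      hmarg, mul_one_div]
  refine ⟨hutil, ?_, fun A hA => by rw [hutil A hA]; field_simp, ?_⟩
  · rw [sum_mul_eq_mul_sum_filter_of_forall_eq_or_eq_zero _ _ _ _
        fun v hv => sup'_univ_eq_or_eq_zero _ (hsupp v hv),
      sum_filter_eq_one_sub_sum_filter hp fun v hv => sup'_univ_eq_iff_ne_zero _ hpos (hsupp v hv),
      hindep.sum_filter_eq_zero hp hpos.ne' hsupp hmarg]
  · have := Real.one_sub_div_pow_le_exp_neg (n := n) (t := 1) (by exact_mod_cast hn)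
    rw [Real.exp_neg, inv_eq_one_div] at this
    gcongr
end

section
/- Let m ≥ 2 and let p_1, …, p_m ∈ (0,1) satisfy Σ_{j=1}^m p_j ≤ 1. Then Π_{j=1}^m (1 − p_j)/p_j ≥ (m−1)^m, with the minimum attained at p_1 = ⋯ = p_m = 1/m. -/
/-! By AM-GM, `1 - p j ≥ ∑_{i ≠ j} p i ≥ (m - 1) (∏_{i ≠ j} p i)^{1/(m-1)}`. Raising to the
power `m - 1` and multiplying over `j`, every `p i` occurs in exactly `m - 1` of the leave-one-out
products, so `(∏ (1 - p j))^{m-1} ≥ ((m - 1)^m ∏ p j)^{m-1}`. -/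

open Finset

theorem Real.card_pow_mul_prod_le_sum_pow {ι : Type*} (s : Finset ι) {z : ι → ℝ}
    (hz : ∀ i ∈ s, 0 ≤ z i) :
    (#s : ℝ) ^ #s * ∏ i ∈ s, z i ≤ (∑ i ∈ s, z i) ^ #s := by
  rcases s.eq_empty_or_nonempty with rfl | hs
  · simp
  have hcard : (#s : ℝ) ≠ 0 := by exact_mod_cast hs.card_pos.ne'
  have amgm : ∏ i ∈ s, z i ^ (#s : ℝ)⁻¹ ≤ ∑ i ∈ s, (#s : ℝ)⁻¹ * z i :=
    geom_mean_le_arith_mean_weighted s _ z (fun _ _ => by positivity)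
      (by rw [sum_const, nsmul_eq_mul, mul_inv_cancel₀ hcard]) hz
  calc (#s : ℝ) ^ #s * ∏ i ∈ s, z i
      = (#s * ∏ i ∈ s, z i ^ (#s : ℝ)⁻¹) ^ #s := by
        rw [mul_pow, ← prod_pow]
        congr 1
        exact prod_congr rfl fun i hi => (rpow_inv_natCast_pow (hz i hi) hs.card_pos.ne').symm
    _ ≤ (#s * ∑ i ∈ s, (#s : ℝ)⁻¹ * z i) ^ #s := by
        gcongr
        exact mul_nonneg (Nat.cast_nonneg _) (prod_nonneg fun i hi => rpow_nonneg (hz i hi) _)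
    _ = (∑ i ∈ s, z i) ^ #s := by rw [← mul_sum, mul_inv_cancel_left₀ hcard]

theorem Finset.prod_prod_erase {ι M : Type*} [Fintype ι] [DecidableEq ι] [CommMonoid M]
    (f : ι → M) : ∏ j, ∏ i ∈ univ.erase j, f i = (∏ i, f i) ^ (Fintype.card ι - 1) := by
  rw [prod_comm' (t' := univ) (s' := fun i => univ.erase i) (by simp [ne_comm])]
  simp only [prod_const, card_erase_of_mem (mem_univ _), card_univ, prod_pow]

section LeaveOneOut

variable {ι : Type*} [Fintype ι] [DecidableEq ι] {n : ℕ} {p : ι → ℝ}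

theorem pow_mul_prod_erase_le_one_sub_pow (hcard : Fintype.card ι = n + 1)
    (hp : ∀ i, 0 ≤ p i) (hsum : ∑ i, p i ≤ 1) (j : ι) :
    (n : ℝ) ^ n * ∏ i ∈ univ.erase j, p i ≤ (1 - p j) ^ n := by
  have hcard_erase : #(univ.erase j) = n := by simp [card_erase_of_mem, hcard]
  have hsum_erase : ∑ i ∈ univ.erase j, p i ≤ 1 - p j := by
    linarith [sum_erase_add univ p (mem_univ j)]
  calc (n : ℝ) ^ n * ∏ i ∈ univ.erase j, p i ≤ (∑ i ∈ univ.erase j, p i) ^ n := by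
        simpa [hcard_erase] using Real.card_pow_mul_prod_le_sum_pow (univ.erase j) fun i _ => hp i
    _ ≤ (1 - p j) ^ n := pow_le_pow_left₀ (sum_nonneg fun i _ => hp i) hsum_erase n

theorem pow_mul_prod_le_prod_one_sub (hcard : Fintype.card ι = n + 1)
    (hp : ∀ i, 0 ≤ p i) (hsum : ∑ i, p i ≤ 1) :
    (n : ℝ) ^ (n + 1) * ∏ i, p i ≤ ∏ i, (1 - p i) := by
  have hq : 0 ≤ ∏ i, (1 - p i) := prod_nonneg fun i _ =>
    sub_nonneg.2 <| (single_le_sum (fun k _ => hp k) (mem_univ i)).trans hsum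
  rcases n.eq_zero_or_pos with rfl | hn
  · simpa using hq
  refine le_of_pow_le_pow_left₀ hn.ne' hq ?_
  calc ((n : ℝ) ^ (n + 1) * ∏ i, p i) ^ n = ∏ j, ((n : ℝ) ^ n * ∏ i ∈ univ.erase j, p i) := by
        rw [prod_mul_distrib, prod_const, prod_prod_erase, card_univ, hcard, mul_pow, ← pow_mul,
          ← pow_mul, Nat.add_sub_cancel, mul_comm n]
    _ ≤ ∏ j, (1 - p j) ^ n :=
        prod_le_prod (fun j _ => mul_nonneg (by positivity) (prod_nonneg fun i _ => hp i))
          fun j _ => pow_mul_prod_erase_le_one_sub_pow hcard hp hsum j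
    _ = (∏ i, (1 - p i)) ^ n := prod_pow _ _ _

end LeaveOneOut

theorem odds_ratio_product_inequality_general (m : ℕ) (p : Fin m → ℝ)
    (hp : ∀ j, p j ∈ Set.Ioo (0 : ℝ) 1) (hsum : ∑ j, p j ≤ 1) :
    ((m : ℝ) - 1) ^ m ≤ ∏ j, (1 - p j) / p j ∧
      ((∀ j, p j = 1 / m) → ∏ j, (1 - p j) / p j = ((m : ℝ) - 1) ^ m) := by
  rcases m with _ | n
  · simp
  have hp_pos : ∀ j, 0 < p j := fun j => (hp j).1
  refine ⟨?_, fun hp_eq => ?_⟩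
  · rw [prod_div_distrib, le_div_iff₀ (prod_pos fun j _ => hp_pos j)]
    simpa using pow_mul_prod_le_prod_one_sub (by simp) (fun j => (hp_pos j).le) hsum
  · have hodds : ∀ j, (1 - p j) / p j = ((n + 1 : ℕ) : ℝ) - 1 := fun j => by
      rw [hp_eq j]
      field_simp
    simp only [hodds, prod_const, card_univ, Fintype.card_fin]

/-- **odds-ratio product inequality.** For `m ≥ 2` and
`p₁, …, p_m ∈ (0,1)` with `∑ p_j ≤ 1`, the product of odds ratios satisfies
`∏ (1 − p_j)/p_j ≥ (m − 1)^m`, with the minimum attained at `p_j = 1/m` for all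
`j`. -/
theorem odds_ratio_product_inequality (m : ℕ) (hm : 2 ≤ m) (p : Fin m → ℝ)
    (hp : ∀ j, p j ∈ Set.Ioo (0 : ℝ) 1) (hsum : ∑ j, p j ≤ 1) :
    ((m : ℝ) - 1) ^ m ≤ ∏ j, (1 - p j) / p j ∧
      ((∀ j, p j = 1 / m) → ∏ j, (1 - p j) / p j = ((m : ℝ) - 1) ^ m) :=
  odds_ratio_product_inequality_general m p hp hsum
end
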